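/- arXiv:1302.6930 — 13 statements merged into one kernel-verified Lean document; each statement's English description precedes it below -/
import Mathlib

section
/- Let d ≥ 2 and suppose x₁^{d-1}·x₂ = λ₁·x₁^d + ∑_{i=3}^{m} λᵢ·(aᵢᵀx)^d in K[x₁,…,xₙ], where each aᵢ ∈ Kⁿ and λᵢ ∈ K. Then m − 2 ≥ d, i.e., at least d powers of linear forms besides x₁^d are needed to express x₁^{d-1}·x₂. -/
/-!
Substituting `x₁ = t`, `x₂ = 1` and `xⱼ = 0` otherwise turns the identity into
`t^(d-1) = λ₁ t^d + ∑ᵢ λᵢ (αᵢ t + βᵢ)^d` in `K[t]`. Comparing the coefficients of `tʲ` for `j < d`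
shows that the moments `∑ᵢ λᵢ αᵢʲ βᵢ^(d-j)` vanish for `j < d - 1` but not for `j = d - 1`.
After dehomogenizing these are the weighted power sums `∑ᵢ eᵢ tᵢʲ`, and weighted power sums over
`k` points that vanish for `j < k` vanish for all `j`, because every `tʲ` agrees on the points with a
polynomial of degree `< k`. Hence there are at least `d` points.
-/

open MvPolynomial Finset

namespace Polynomial

theorem _root_.Finset.sum_mul_pow_eq_zero_of_forall_lt_card {R ι : Type*} [CommRing R] {s : Finset ι}
    {e t : ι → R} (h : ∀ j < #s, ∑ i ∈ s, e i * t i ^ j = 0) (j : ℕ) :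
    ∑ i ∈ s, e i * t i ^ j = 0 := by
  nontriviality R
  rcases s.eq_empty_or_nonempty with rfl | hs
  · exact sum_empty
  set P : R[X] := ∏ i ∈ s, (X - C (t i))
  have hP : P.Monic := monic_prod_X_sub_C t s
  have hPdeg : P.natDegree = #s := natDegree_finsetProd_X_sub_C_eq_card s t
  have hP1 : P ≠ 1 := fun h1 => by simp [h1, hs.card_pos.ne] at hPdeg
  have hroot : ∀ i ∈ s, P.eval (t i) = 0 := fun i hi => by
    rw [eval_prod]; exact prod_eq_zero hi (by simp)
  -- `t i ^ j` is the value at `t i` of the remainder of `X ^ j` modulo `P`, of degree `< #s`.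
  set r := (X : R[X]) ^ j %ₘ P
  have hr : r.natDegree < #s := hPdeg ▸ natDegree_modByMonic_lt _ hP hP1
  have hval : ∀ i ∈ s, t i ^ j = ∑ k ∈ range #s, r.coeff k * t i ^ k := fun i hi => by
    rw [← eval_eq_sum_range' hr, ← eval_X_pow (x := t i) (n := j), ← modByMonic_add_div (X ^ j) P,
      eval_add, eval_mul, hroot i hi, zero_mul, add_zero]
  calc ∑ i ∈ s, e i * t i ^ j
      = ∑ k ∈ range #s, r.coeff k * ∑ i ∈ s, e i * t i ^ k := by
        simp_rw [sum_congr rfl fun i hi => congrArg (e i * ·) (hval i hi), mul_sum]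
        rw [sum_comm]; exact sum_congr rfl fun _ _ => sum_congr rfl fun _ _ => by ring
    _ = 0 := sum_eq_zero fun k hk => by rw [h k (mem_range.mp hk), mul_zero]

theorem coeff_C_mul_X_add_C_pow {R : Type*} [CommSemiring R] (a b : R) (n k : ℕ) :
    ((C a * X + C b) ^ n).coeff k = a ^ k * b ^ (n - k) * n.choose k := by
  have hcomp : (C a * X + C b) ^ n = ((X + C b) ^ n).comp (C a * X) := by
    simp only [pow_comp, add_comp, X_comp, C_comp]
  rw [hcomp, comp_C_mul_X_coeff, coeff_X_add_C_pow]
  ring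

theorem add_one_le_card_of_X_pow_eq {K ι : Type*} [Field K] [CharZero K] {s : Finset ι}
    {c : K} {l α β : ι → K} {d : ℕ}
    (h : (X : K[X]) ^ d = C c * X ^ (d + 1) + ∑ i ∈ s, C (l i) * (C (α i) * X + C (β i)) ^ (d + 1)) :
    d + 1 ≤ #s := by
  have hmoment : ∀ j ≤ d, ((d + 1).choose j : K) * ∑ i ∈ s, l i * (α i ^ j * β i ^ (d + 1 - j)) =
      if j = d then 1 else 0 := by
    intro j hj
    have hcoeff := congrArg (coeff · j) h
    simp only [coeff_X_pow, coeff_add, coeff_C_mul, finsetSum_coeff, coeff_C_mul_X_add_C_pow,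
      if_neg (by omega : j ≠ d + 1), mul_zero, zero_add] at hcoeff
    rw [hcoeff, mul_sum]
    exact sum_congr rfl fun i _ => by ring
  -- Dehomogenize; dividing by `β i = 0` is harmless since for `j ≤ d` those terms vanish anyway.
  set e : ι → K := fun i => l i * β i ^ (d + 1)
  set t : ι → K := fun i => α i / β i
  have hdehom : ∀ j ≤ d, ∑ i ∈ s, e i * t i ^ j = ∑ i ∈ s, l i * (α i ^ j * β i ^ (d + 1 - j)) := by
    intro j hj
    refine sum_congr rfl fun i _ => ?_
    rcases eq_or_ne (β i) 0 with hβ | hβ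
    · simp [e, t, hβ, zero_pow (by omega : d + 1 - j ≠ 0)]
    · simp only [e, t, div_pow, ← pow_sub_mul_pow (β i) (by omega : j ≤ d + 1)]
      field_simp
  have hvanish : ∀ j < d, ∑ i ∈ s, e i * t i ^ j = 0 := fun j hj => by
    have hchoose : ((d + 1).choose j : K) ≠ 0 := Nat.cast_ne_zero.mpr (Nat.choose_pos (by omega)).ne'
    simpa [hdehom j hj.le, hchoose, hj.ne] using hmoment j hj.le
  by_contra! hcard
  have hlast := hmoment d le_rfl
  rw [← hdehom d le_rfl, sum_mul_pow_eq_zero_of_forall_lt_card (fun j hj => hvanish j (by omega)) d,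
    mul_zero, if_pos rfl] at hlast
  exact zero_ne_one hlast

end Polynomial

theorem MvPolynomial.aeval_pi_single_add_pi_single_sum_C_mul_X {σ R S : Type*} [CommSemiring R]
    [CommSemiring S] [Algebra R S] [Fintype σ] [DecidableEq σ] (a : σ → R) (i₀ i₁ : σ) (p q : S) :
    aeval (Pi.single i₀ p + Pi.single i₁ q : σ → S) (∑ j, C (a j) * X j) =
      algebraMap R S (a i₀) * p + algebraMap R S (a i₁) * q := by
  simp [mul_add, sum_add_distrib, Pi.single_apply]

/-- If `x₁^(d-1) x₂ = λ₁ x₁^d + ∑_{i=3}^m λᵢ (aᵢᵀ x)^d` in `K[x₁,…,xₙ]` with `d ≥ 2`,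
then `m - 2 ≥ d`: at least `d` powers of linear forms are needed besides `x₁^d`. -/
theorem stmt4 (K : Type*) [Field K] [CharZero K] (n m d : ℕ) (hn : 2 ≤ n)
    (a : ℕ → Fin n → K) (l : ℕ → K)
    (h : (X ⟨0, by omega⟩ : MvPolynomial (Fin n) K) ^ (d - 1) * X ⟨1, by omega⟩ =
      C (l 1) * (X ⟨0, by omega⟩ : MvPolynomial (Fin n) K) ^ d +
      ∑ i ∈ Icc 3 m, C (l i) * (∑ j, C (a i j) * X j) ^ d) :
    d ≤ m - 2 := by
  obtain _ | d := d
  · exact Nat.zero_le _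
  set i₀ : Fin n := ⟨0, by omega⟩
  set i₁ : Fin n := ⟨1, by omega⟩
  have hne : i₀ ≠ i₁ := by simp [i₀, i₁]
  -- Set `x₁ = t`, `x₂ = 1` and all other variables to `0`.
  have hsub := congrArg (aeval (Pi.single i₀ Polynomial.X + Pi.single i₁ 1 : Fin n → Polynomial K)) h
  simp only [map_add, map_mul, map_pow, map_sum, aeval_C, aeval_X,
    ↓aeval_pi_single_add_pi_single_sum_C_mul_X, Pi.add_apply, Pi.single_eq_same,
    Pi.single_eq_of_ne hne, Pi.single_eq_of_ne hne.symm, Polynomial.algebraMap_eq, add_zero,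
    zero_add, mul_one, Nat.add_sub_cancel] at hsub
  have hcard := Polynomial.add_one_le_card_of_X_pow_eq hsub
  rw [Nat.card_Icc] at hcard
  omega
end

section
/- Let H = ∑_{i=1}^{N} (cᵢᵀx)^{dᵢ} · bᵢ with bᵢ, cⱼ ∈ Kⁿ and dᵢ ∈ ℕ, such that cⱼᵀbᵢ = 0 for all i ≥ j ≥ 1. Then for any vectors v₁,…,vₙ ∈ Kⁿ, the matrix S = ∑_{k=1}^{n} (JH)|_{x=v_k} satisfies S^{N+1} = 0; in particular S is nilpotent and det(n·Iₙ + S) = nⁿ ≠ 0. -/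
open MvPolynomial Finset

lemma auxPow {R m : Type*} [CommRing R] [Fintype m] [DecidableEq m] :
    ∀ (N : ℕ) (A : Fin N → Matrix m m R),
      (∀ i j, i ≤ j → A i * A j = 0) → (∑ i, A i) ^ (N + 1) = 0 := by
  intro N
  induction N with
  | zero => intro A _; simp
  | succ N ih =>
    intro A hA
    set T := ∑ i : Fin N, A i.succ with hT
    have hsum : (∑ i, A i) = A 0 + T := Fin.sum_univ_succ A
    have h0 : A 0 * (∑ i, A i) = 0 := by
      rw [Finset.mul_sum]
      exact Finset.sum_eq_zero fun j _ => hA 0 j (Fin.zero_le j)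
    have hSS : (∑ i, A i) * (∑ i, A i) = T * (∑ i, A i) := by
      nth_rewrite 1 [hsum]
      rw [add_mul, h0, zero_add]
    have key : ∀ k, (∑ i, A i) ^ (k + 1) = T ^ k * (∑ i, A i) := by
      intro k
      induction k with
      | zero => simp
      | succ k ihk =>
        rw [pow_succ, ihk, mul_assoc, hSS, ← mul_assoc, ← pow_succ]
    rw [key (N + 1), ih (fun i => A i.succ)
      (fun i j hij => hA i.succ j.succ (Fin.succ_le_succ_iff.mpr hij)), zero_mul]

lemma auxDet {K : Type*} [Field K] {m : ℕ} (S : Matrix (Fin m) (Fin m) K)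
    (hS : IsNilpotent S) (a : K) :
    (a • (1 : Matrix (Fin m) (Fin m) K) + S).det = a ^ m := by
  have hchar : S.charpoly = Polynomial.X ^ m := by
    have h := Matrix.isNilpotent_charpoly_sub_pow_of_isNilpotent hS
    rw [Fintype.card_fin] at h
    have h2 := h.eq_zero
    rwa [sub_eq_zero] at h2
  have heval := congrArg (Polynomial.eval (-a)) hchar
  rw [Polynomial.eval_pow, Polynomial.eval_X] at heval
  have hmap : ((Matrix.charmatrix S).map (Polynomial.evalRingHom (-a) : Polynomial K →+* K))
      = -(a • (1 : Matrix (Fin m) (Fin m) K) + S) := by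
    ext i j
    by_cases hij : i = j
    · subst hij
      simp [Matrix.charmatrix_apply, Matrix.one_apply, Matrix.diagonal_apply]
      ring
    · simp [Matrix.charmatrix_apply, Matrix.one_apply, Matrix.diagonal_apply, hij]
  have hdet : Polynomial.eval (-a) S.charpoly
      = (-(a • (1 : Matrix (Fin m) (Fin m) K) + S)).det := by
    rw [Matrix.charpoly, ← hmap]
    exact (RingHom.map_det (Polynomial.evalRingHom (-a)) _)
  rw [heval, Matrix.det_neg] at hdet
  rw [Fintype.card_fin] at hdet
  have hthis : ((-1 : K) ^ m) * (a • (1 : Matrix (Fin m) (Fin m) K) + S).det = (-a) ^ m :=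
    hdet.symm
  have hneg : (-a) ^ m = (-1 : K) ^ m * a ^ m := by rw [neg_pow]
  rw [hneg] at hthis
  exact mul_left_cancel₀ (pow_ne_zero _ (by norm_num)) hthis

/-- If `H = ∑_{i=1}^N (cᵢᵀx)^{dᵢ} bᵢ` with `cⱼᵀbᵢ = 0` for `i ≥ j`, then for any points
`v₁,…,vₙ ∈ Kⁿ` the matrix `S = ∑ₖ (JH)|_{x = vₖ}` satisfies `S^(N+1) = 0`; in particular
`S` is nilpotent and `det (n Iₙ + S) = nⁿ ≠ 0`. -/
theorem stmt5 (K : Type*) [Field K] [CharZero K] (n N : ℕ)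
    (b c : Fin N → Fin n → K) (e : Fin N → ℕ)
    (horth : ∀ i j : Fin N, j ≤ i → ∑ t, c j t * b i t = 0)
    (H : Fin n → MvPolynomial (Fin n) K)
    (hH : ∀ p, H p = ∑ i, C (b i p) * (∑ t, C (c i t) * X t) ^ (e i))
    (v : Fin n → Fin n → K)
    (S : Matrix (Fin n) (Fin n) K)
    (hS : S = ∑ k, Matrix.of fun p q => eval (v k) (pderiv q (H p))) :
    S ^ (N + 1) = 0 ∧ IsNilpotent S ∧
      ((n : K) • (1 : Matrix (Fin n) (Fin n) K) + S).det = (n : K) ^ n ∧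
      (n : K) ^ n ≠ 0 := by
  set β : Fin N → K := fun i => ∑ k, (e i : K) * (∑ t, c i t * v k t) ^ (e i - 1) with hβ
  set A : Fin N → Matrix (Fin n) (Fin n) K :=
    fun i => β i • Matrix.of fun p q => b i p * c i q with hA
  -- pointwise derivative evaluation
  have hentry : ∀ (k : Fin n) (p q : Fin n),
      eval (v k) (pderiv q (H p))
        = ∑ i, b i p * ((e i : K) * (∑ t, c i t * v k t) ^ (e i - 1) * c i q) := by
    intro k p q
    rw [hH p, map_sum, map_sum]
    refine Finset.sum_congr rfl fun i _ => ?_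
    rw [pderiv_C_mul, (pderiv q).leibniz_pow]
    simp [Finset.mul_sum, smul_eq_mul, Pi.single_apply, apply_ite (eval (v k)), mul_ite,
      Finset.sum_ite_eq, mul_comm, mul_assoc, mul_left_comm]
  -- S is the sum of the rank-one pieces
  have hSA : S = ∑ i, A i := by
    rw [hS]
    ext p q
    simp only [Matrix.sum_apply, Matrix.of_apply, hA, Matrix.smul_apply, smul_eq_mul, hβ]
    rw [show (∑ k, eval (v k) (pderiv q (H p)))
        = ∑ k, ∑ i, b i p * ((e i : K) * (∑ t, c i t * v k t) ^ (e i - 1) * c i q) from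
      Finset.sum_congr rfl fun k _ => hentry k p q]
    rw [Finset.sum_comm]
    refine Finset.sum_congr rfl fun i _ => ?_
    rw [Finset.sum_mul]
    exact Finset.sum_congr rfl fun k _ => by ring
  -- the orthogonality hypothesis gives vanishing products
  have hAh : ∀ i j : Fin N, i ≤ j → A i * A j = 0 := by
    intro i j hij
    ext p q
    simp only [Matrix.mul_apply, hA, Matrix.smul_apply, Matrix.of_apply, smul_eq_mul,
      Matrix.zero_apply]
    calc ∑ t, β i * (b i p * c i t) * (β j * (b j t * c j q))
        = β i * β j * b i p * c j q * ∑ t, c i t * b j t := by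
          rw [Finset.mul_sum]
          exact Finset.sum_congr rfl fun t _ => by ring
      _ = 0 := by rw [horth j i hij, mul_zero]
  have hpow : S ^ (N + 1) = 0 := by
    rw [hSA]; exact auxPow N A hAh
  have hnil : IsNilpotent S := ⟨N + 1, hpow⟩
  refine ⟨hpow, hnil, auxDet S hnil (n : K), ?_⟩
  have hcast : ((n : K) ^ n) = ((n ^ n : ℕ) : K) := by push_cast; rfl
  rw [hcast]
  refine Nat.cast_ne_zero.mpr ?_
  cases n with
  | zero => simp
  | succ m => exact pow_ne_zero _ m.succ_ne_zero
end

section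
/- Let H = ∑_{i=1}^{N} (cᵢᵀx)^{dᵢ}·bᵢ over a field K of characteristic zero, with cⱼᵀbᵢ = 0 for all i ≥ j ≥ 1. Then the Jacobian matrix JH is nilpotent; more precisely, (JH)^{N+1} = 0 as a matrix over K[x]. -/
/-! The Jacobian splits as `JH = ∑ᵢ Aᵢ` with the rank-one terms
`Aᵢ = dᵢ (cᵢᵀx)^(dᵢ-1) · bᵢcᵢᵀ`, and `cⱼᵀbᵢ = 0` for `i ≥ j` gives `Aᵢ Aⱼ = 0` whenever `i ≤ j`.
A product of `N + 1` of the `Aᵢ` can then be nonzero only if its indices strictly decrease,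
which is impossible with `N` indices. -/

open MvPolynomial Finset

section StrictlyUpperProducts

variable {R ι : Type*} [Ring R] [Fintype ι] [LinearOrder ι]

lemma sum_pow_mul_eq_zero_of_card_lt {A : ι → R} (hA : ∀ i j, i ≤ j → A i * A j = 0)
    {m : ℕ} {i : ι} (hm : #{j | i < j} < m) : (∑ j, A j) ^ m * A i = 0 := by
  induction m generalizing i with
  | zero => exact absurd hm (Nat.not_lt_zero _)
  | succ m ih =>
    have hsum : (∑ j, A j) * A i = ∑ j with i < j, A j * A i := by
      rw [sum_mul, sum_filter]
      exact sum_congr rfl fun j _ => by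
        split_ifs with hij
        · rfl
        · exact hA j i (not_lt.mp hij)
    rw [pow_succ, mul_assoc, hsum, mul_sum]
    refine sum_eq_zero fun j hj => ?_
    have hij : i < j := (mem_filter.mp hj).2
    have hsub : univ.filter (j < ·) ⊆ univ.filter (i < ·) :=
      monotone_filter_right _ fun _ _ => hij.trans
    have hcard : #{k | j < k} < #{k | i < k} :=
      card_lt_card <| (ssubset_iff_of_subset hsub).mpr ⟨j, by simp [hij]⟩
    rw [← mul_assoc, ih (by omega), zero_mul]

lemma sum_pow_card_add_one_eq_zero {A : ι → R} (hA : ∀ i j, i ≤ j → A i * A j = 0) :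
    (∑ i, A i) ^ (Fintype.card ι + 1) = 0 := by
  rw [pow_succ, mul_sum]
  refine sum_eq_zero fun i _ => sum_pow_mul_eq_zero_of_card_lt hA ?_
  exact card_lt_univ_of_notMem (x := i) (by simp)

end StrictlyUpperProducts

section LinearFormPower

variable {R σ : Type*} [CommRing R] [Fintype σ]

lemma pderiv_sum_C_mul_X (c : σ → R) (q : σ) : pderiv q (∑ t, C (c t) * X t) = C (c q) := by
  classical
  simp [pderiv_X, Pi.single_apply]

lemma pderiv_C_mul_sum_C_mul_X_pow (β : R) (c : σ → R) (d : ℕ) (q : σ) :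
    pderiv q (C β * (∑ t, C (c t) * X t) ^ d) =
      ((d : MvPolynomial σ R) * (∑ t, C (c t) * X t) ^ (d - 1)) * C (β * c q) := by
  rw [pderiv_C_mul, pderiv_pow, pderiv_sum_C_mul_X, map_mul]
  ring

end LinearFormPower

theorem Matrix.vecMulVec_mul_vecMulVec_of_dotProduct_eq_zero {α l m n : Type*} [CommSemiring α]
    [Fintype m] {u : l → α} {v w : m → α} (x : n → α) (h : v ⬝ᵥ w = 0) :
    vecMulVec u v * vecMulVec w x = 0 := by
  ext
  simp [vecMulVec_mul_vecMulVec, h, vecMulVec_apply]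

theorem stmt6_general (K : Type*) [Field K] (n N : ℕ)
    (b c : Fin N → Fin n → K) (e : Fin N → ℕ)
    (horth : ∀ i j : Fin N, j ≤ i → ∑ t, c j t * b i t = 0)
    (H : Fin n → MvPolynomial (Fin n) K)
    (hH : ∀ p, H p = ∑ i, C (b i p) * (∑ t, C (c i t) * X t) ^ (e i))
    (M : Matrix (Fin n) (Fin n) (MvPolynomial (Fin n) K))
    (hM : M = Matrix.of fun p q => pderiv q (H p)) :
    M ^ (N + 1) = 0 ∧ IsNilpotent M := by
  set A : Fin N → Matrix (Fin n) (Fin n) (MvPolynomial (Fin n) K) := fun i =>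
    ((e i : MvPolynomial (Fin n) K) * (∑ t, C (c i t) * X t) ^ (e i - 1)) •
      (Matrix.vecMulVec (b i) (c i)).map C
  have hMA : M = ∑ i, A i := by
    refine Matrix.ext fun p q => ?_
    simp only [hM, A, hH, Matrix.of_apply, map_sum, Matrix.sum_apply, pderiv_C_mul_sum_C_mul_X_pow,
      Matrix.smul_apply, Matrix.map_apply, Matrix.vecMulVec_apply, smul_eq_mul]
  have hA : ∀ i j, i ≤ j → A i * A j = 0 := by
    intro i j hij
    rw [smul_mul_smul_comm, ← Matrix.map_mul,
      Matrix.vecMulVec_mul_vecMulVec_of_dotProduct_eq_zero _ (horth j i hij)]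
    simp
  have hpow : M ^ (N + 1) = 0 := by
    simpa [hMA] using sum_pow_card_add_one_eq_zero hA
  exact ⟨hpow, N + 1, hpow⟩

/-- If `H = ∑_{i=1}^N (cᵢᵀx)^{dᵢ} bᵢ` with `cⱼᵀbᵢ = 0` for `i ≥ j`, then the Jacobian
matrix `JH` (over the polynomial ring) satisfies `(JH)^(N+1) = 0`; in particular it is
nilpotent. -/
theorem stmt6 (K : Type*) [Field K] [CharZero K] (n N : ℕ)
    (b c : Fin N → Fin n → K) (e : Fin N → ℕ)
    (horth : ∀ i j : Fin N, j ≤ i → ∑ t, c j t * b i t = 0)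
    (H : Fin n → MvPolynomial (Fin n) K)
    (hH : ∀ p, H p = ∑ i, C (b i p) * (∑ t, C (c i t) * X t) ^ (e i))
    (M : Matrix (Fin n) (Fin n) (MvPolynomial (Fin n) K))
    (hM : M = Matrix.of fun p q => pderiv q (H p)) :
    M ^ (N + 1) = 0 ∧ IsNilpotent M :=
  stmt6_general K n N b c e horth H hH M hM
end

section
/- Let H = ∑_{i=1}^{N} (cᵢᵀx)^{dᵢ}·bᵢ over K of characteristic zero with cⱼᵀbᵢ = 0 for all i ≥ j ≥ 1, and let F = x + H. Then for any d−1 points v₁,…,v_{d−1} ∈ Kⁿ with d ≥ 2, det(∑_{i=1}^{d−1} (JF)|_{x=vᵢ}) = (d−1)ⁿ ≠ 0. -/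
open MvPolynomial Finset

lemma aux_nilp {R : Type*} [Ring R] (N : ℕ) (A : Fin N → R)
    (h : ∀ i j : Fin N, i ≤ j → A i * A j = 0) :
    (∑ i, A i) ^ (N + 1) = 0 := by
  set M := ∑ i, A i with hM
  set S : ℕ → R := fun m => ∑ i ∈ Finset.univ.filter (fun i : Fin N => i.val < m), A i with hS
  have key : ∀ k, S k * M =
      ∑ i ∈ Finset.univ.filter (fun i : Fin N => i.val < k), A i * S i.val := by
    intro k
    rw [hS]
    simp only [Finset.sum_mul]
    apply Finset.sum_congr rfl
    intro i _
    have hsplit : M = S i.val + ∑ j ∈ Finset.univ.filter (fun j : Fin N => ¬ j.val < i.val), A j := by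
      rw [hS, hM]; exact (Finset.sum_filter_add_sum_filter_not _ _ _).symm
    rw [hsplit, mul_add]
    have hz : A i * ∑ j ∈ Finset.univ.filter (fun j : Fin N => ¬ j.val < i.val), A j = 0 := by
      rw [Finset.mul_sum]
      apply Finset.sum_eq_zero
      intro j hj
      simp only [Finset.mem_filter, not_lt] at hj
      exact h i j hj.2
    rw [hz, add_zero]
  have main : ∀ m, S m * M ^ m = 0 := by
    intro m
    induction m using Nat.strong_induction_on with
    | _ m ih =>
      match m with
      | 0 => simp [hS]
      | (m + 1) =>
        rw [pow_succ', ← mul_assoc, key, Finset.sum_mul]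
        apply Finset.sum_eq_zero
        intro i hi
        simp only [Finset.mem_filter] at hi
        have hle : i.val ≤ m := Nat.lt_succ_iff.mp hi.2
        rw [mul_assoc]
        have h1 : S i.val * M ^ m = 0 := by
          calc S i.val * M ^ m = S i.val * (M ^ i.val * M ^ (m - i.val)) := by
                rw [← pow_add, Nat.add_sub_cancel' hle]
            _ = (S i.val * M ^ i.val) * M ^ (m - i.val) := by rw [mul_assoc]
            _ = 0 := by rw [ih i.val hi.2, zero_mul]
        rw [h1, mul_zero]
  have hSN : S N = M := by
    rw [hS, hM]
    apply Finset.sum_congr _ (fun _ _ => rfl)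
    ext i; simp [i.isLt]
  calc (∑ i, A i) ^ (N + 1) = S N * M ^ N := by rw [hSN, ← hM, pow_succ']
    _ = 0 := main N

lemma aux_eval_charpoly {K : Type*} [CommRing K] {n : ℕ}
    (B : Matrix (Fin n) (Fin n) K) (r : K) :
    Polynomial.eval r B.charpoly = (r • (1 : Matrix (Fin n) (Fin n) K) - B).det := by
  rw [Matrix.charpoly, ← Polynomial.coe_evalRingHom, RingHom.map_det]
  congr 1
  ext i j
  rcases eq_or_ne i j with rfl | hij
  · simp [Matrix.charmatrix_apply_eq, Matrix.one_apply]
  · simp [Matrix.charmatrix_apply_ne _ _ _ hij, Matrix.one_apply_ne hij, hij]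

/-- If `H = ∑_{i=1}^N (cᵢᵀx)^{dᵢ} bᵢ` with `cⱼᵀbᵢ = 0` for `i ≥ j`, `F = x + H` and
`d ≥ 2`, then for any points `v₁,…,v_{d-1} ∈ Kⁿ`,
`det (∑_{i=1}^{d-1} (JF)|_{x=vᵢ}) = (d-1)ⁿ ≠ 0`. -/
theorem stmt7 (K : Type*) [Field K] [CharZero K] (n N : ℕ)
    (b c : Fin N → Fin n → K) (e : Fin N → ℕ)
    (horth : ∀ i j : Fin N, j ≤ i → ∑ t, c j t * b i t = 0)
    (H : Fin n → MvPolynomial (Fin n) K)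
    (hH : ∀ p, H p = ∑ i, C (b i p) * (∑ t, C (c i t) * X t) ^ (e i))
    (d : ℕ) (hd : 2 ≤ d) (v : Fin (d - 1) → Fin n → K) :
    (∑ i, ((1 : Matrix (Fin n) (Fin n) K) +
        Matrix.of fun p q => eval (v i) (pderiv q (H p)))).det = ((d : K) - 1) ^ n ∧
      ((d : K) - 1) ^ n ≠ 0 := by
  have hd1 : 1 ≤ d := by omega
  set α : Fin N → K := fun i => ∑ k, (e i : K) * (∑ t, c i t * v k t) ^ (e i - 1) with hα
  set A : Fin N → Matrix (Fin n) (Fin n) K :=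
    fun i => Matrix.of fun p q => b i p * (α i * c i q) with hA
  set M : Matrix (Fin n) (Fin n) K := ∑ i, A i with hM
  have hAA : ∀ i j : Fin N, i ≤ j → A i * A j = 0 := by
    intro i j hij
    ext p q
    rw [Matrix.mul_apply]
    simp only [hA, Matrix.of_apply, Matrix.zero_apply]
    have hterm : ∀ t, (b i p * (α i * c i t)) * (b j t * (α j * c j q))
        = (b i p * α i * (α j * c j q)) * (c i t * b j t) := by intro t; ring
    rw [Finset.sum_congr rfl (fun t _ => hterm t), ← Finset.mul_sum, horth j i hij, mul_zero]
  have hnil : IsNilpotent M := ⟨N + 1, aux_nilp N A hAA⟩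
  have hev : ∀ (k : Fin (d - 1)) p q, eval (v k) (pderiv q (H p))
      = ∑ i, b i p * ((e i : K) * (∑ t, c i t * v k t) ^ (e i - 1) * c i q) := by
    intro k p q
    rw [hH, map_sum, map_sum]
    apply Finset.sum_congr rfl
    intro i _
    have hpd : pderiv q (∑ t, C (c i t) * X t) = C (c i q) := by
      rw [map_sum]
      simp [pderiv_X, Pi.single_apply]
    rw [pderiv_C_mul, pderiv_pow, hpd]
    simp [eval_sum]
  have hsum : (∑ k, ((1 : Matrix (Fin n) (Fin n) K) +
      Matrix.of fun p q => eval (v k) (pderiv q (H p))))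
      = ((d - 1 : ℕ) : K) • 1 + M := by
    rw [Finset.sum_add_distrib, Finset.sum_const, Finset.card_univ, Fintype.card_fin,
        ← Nat.cast_smul_eq_nsmul K]
    congr 1
    ext p q
    rw [Matrix.sum_apply, hM, Matrix.sum_apply]
    simp only [Matrix.of_apply]
    rw [Finset.sum_congr rfl (fun k _ => hev k p q), Finset.sum_comm]
    apply Finset.sum_congr rfl
    intro i _
    simp only [hA, Matrix.of_apply, hα, Finset.sum_mul, Finset.mul_sum]
  have hchar : Matrix.charpoly (-M) = Polynomial.X ^ n := by
    have h1 := Matrix.isNilpotent_charpoly_sub_pow_of_isNilpotent hnil.neg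
    rw [Fintype.card_fin] at h1
    exact sub_eq_zero.mp h1.eq_zero
  have hdet : (((d - 1 : ℕ) : K) • (1 : Matrix (Fin n) (Fin n) K) + M).det
      = (((d - 1 : ℕ) : K)) ^ n := by
    have h2 := aux_eval_charpoly (-M) ((d - 1 : ℕ) : K)
    rw [hchar] at h2
    simp only [sub_neg_eq_add] at h2
    rw [← h2, Polynomial.eval_pow, Polynomial.eval_X]
  have hcast : ((d - 1 : ℕ) : K) = (d : K) - 1 := by
    push_cast [Nat.cast_sub hd1]; ring
  have hne : ((d : K) - 1) ^ n ≠ 0 := by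
    apply pow_ne_zero
    rw [sub_ne_zero]
    intro hc
    have : d = 1 := by exact_mod_cast hc
    omega
  exact ⟨by rw [hsum, hdet, hcast], hne⟩
end

section
/- Let H : K⁴ → K⁴ be defined by H = x₁^{d−3}·(0, 0, x₂(x₁x₃ − x₂x₄), x₁(x₁x₃ − x₂x₄)) for d ≥ 3 over a field K of characteristic zero. Then F = x + H is a quasi-translation, i.e., (x − H) ∘ (x + H) = x, so x − H is the inverse of x + H. -/
/-- For `d ≥ 3` and `H = x₁^(d-3) (0, 0, x₂(x₁x₃ - x₂x₄), x₁(x₁x₃ - x₂x₄))`,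
the map `F = x + H` is a quasi-translation: `x - H` is its inverse. -/
theorem stmt8 (K : Type*) [Field K] [CharZero K] (d : ℕ) (hd : 3 ≤ d)
    (H : (Fin 4 → K) → (Fin 4 → K))
    (hH : ∀ v, H v = fun j => v 0 ^ (d - 3) *
      ![0, 0, v 1 * (v 0 * v 2 - v 1 * v 3), v 0 * (v 0 * v 2 - v 1 * v 3)] j) :
    ∀ v : Fin 4 → K, (v + H v) - H (v + H v) = v := by
  intro v
  funext j
  simp only [Pi.add_apply, Pi.sub_apply, hH]
  fin_cases j <;> simp <;> ring
end

section
/- Let d ≥ 3 and H = x₁^{d−3}·(0, 0, x₂(x₁x₃ − x₂x₄), x₁(x₁x₃ − x₂x₄)) over ℂ, and let F = x + H. Set c = ((d−1)/√(d−2))·i ∈ ℂ. Then det((d−2)·(JF)|_{x=(1,0,0,0)} + (JF)|_{x=(1,c,0,0)}) = 0; in particular there exist points v₁,…,v_{d−1} ∈ ℂ⁴ with det(∑_{i=1}^{d−1}(JF)|_{x=vᵢ}) = 0. -/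
open MvPolynomial Finset

lemma jfcomp (e : ℕ) (t : ℂ)
    (JF : (Fin 4 → ℂ) → Matrix (Fin 4) (Fin 4) ℂ)
    (hJF : ∀ v, JF v = 1 + Matrix.of fun p q => eval v (pderiv q
      ((![0, 0, X 0 ^ e * (X 1 * (X 0 * X 2 - X 1 * X 3)),
      X 0 ^ e * (X 0 * (X 0 * X 2 - X 1 * X 3))] : Fin 4 → MvPolynomial (Fin 4) ℂ) p))) :
    JF ![1, t, 0, 0] = !![1,0,0,0; 0,1,0,0; 0,0,1+t,-t^2; 0,0,1,1-t] := by
  rw [hJF]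
  ext p q
  fin_cases p <;> fin_cases q <;>
    simp [Matrix.one_apply, pderiv_mul, pderiv_pow, pderiv_X, Pi.single_apply,
      Matrix.vecHead, Matrix.vecTail] <;> ring

/-- For `d ≥ 3`, `H = x₁^(d-3) (0, 0, x₂(x₁x₃ - x₂x₄), x₁(x₁x₃ - x₂x₄))` over `ℂ`,
`F = x + H` and `c = ((d-1)/√(d-2)) i`, we have
`det ((d-2) (JF)|_{x=(1,0,0,0)} + (JF)|_{x=(1,c,0,0)}) = 0`; in particular there are
points `v₁,…,v_{d-1}` with `det (∑ (JF)|_{x=vᵢ}) = 0`. -/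
theorem stmt9 (d : ℕ) (hd : 3 ≤ d)
    (H : Fin 4 → MvPolynomial (Fin 4) ℂ)
    (hH : H = ![0, 0, X 0 ^ (d - 3) * (X 1 * (X 0 * X 2 - X 1 * X 3)),
      X 0 ^ (d - 3) * (X 0 * (X 0 * X 2 - X 1 * X 3))])
    (JF : (Fin 4 → ℂ) → Matrix (Fin 4) (Fin 4) ℂ)
    (hJF : ∀ v, JF v = 1 + Matrix.of fun p q => eval v (pderiv q (H p)))
    (c : ℂ) (hc : c = ((d : ℂ) - 1) / ((Real.sqrt ((d : ℝ) - 2) : ℝ) : ℂ) * Complex.I) :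
    (((d : ℂ) - 2) • JF ![1, 0, 0, 0] + JF ![1, c, 0, 0]).det = 0 ∧
      ∃ v : Fin (d - 1) → Fin 4 → ℂ, (∑ i, JF (v i)).det = 0 := by
  subst hH
  obtain ⟨e, rfl⟩ : ∃ e, d = e + 3 := ⟨d - 3, by omega⟩
  set n : ℂ := (e : ℂ) with hn
  set s : ℂ := ((Real.sqrt (((e + 3 : ℕ) : ℝ) - 2) : ℝ) : ℂ) with hs
  have hdc : ((e + 3 : ℕ) : ℂ) = n + 3 := by push_cast; ring
  have hd3 : e + 3 - 3 = e := by omega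
  rw [hd3] at hJF
  have h0 := jfcomp e 0 JF hJF
  have h1 := jfcomp e c JF hJF
  have hs2 : s ^ 2 = n + 1 := by
    rw [hs, ← Complex.ofReal_pow, Real.sq_sqrt (by push_cast; linarith)]
    push_cast; ring
  have hn1 : n + 1 ≠ 0 := by
    have : ((e + 1 : ℕ) : ℂ) ≠ 0 := Nat.cast_ne_zero.2 (by omega)
    push_cast at this; simpa using this
  have hsne : s ≠ 0 := by
    intro h; rw [h] at hs2; simp at hs2; exact hn1 hs2.symm
  have hscs : s * c = (n + 2) * Complex.I := by
    rw [hc, hdc]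
    field_simp
    ring
  have hkey : (n + 1) * c ^ 2 = -(n + 2) ^ 2 := by
    calc (n + 1) * c ^ 2 = (s * c) ^ 2 := by rw [← hs2]; ring
    _ = ((n + 2) * Complex.I) ^ 2 := by rw [hscs]
    _ = -(n + 2) ^ 2 := by rw [mul_pow, Complex.I_sq]; ring
  have hM : (((↑(e + 3) : ℂ)) - 2) • JF ![1, 0, 0, 0] + JF ![1, c, 0, 0]
      = !![n+2,0,0,0; 0,n+2,0,0; 0,0,n+2+c,-c^2; 0,0,n+2,n+2-c] := by
    rw [h0, h1, hdc]
    ext p q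
    fin_cases p <;> fin_cases q <;>
      simp [Matrix.add_apply, Matrix.smul_apply, Matrix.vecHead, Matrix.vecTail] <;> ring
  have hdet0 : (!![n+2,0,0,0; 0,n+2,0,0; 0,0,n+2+c,-c^2; 0,0,n+2,n+2-c] :
      Matrix (Fin 4) (Fin 4) ℂ).det = 0 := by
    simp [Matrix.det_succ_row_zero, Fin.sum_univ_succ, -mul_eq_zero]
    linear_combination (n + 2) ^ 2 * hkey
  refine ⟨by rw [hM]; exact hdet0, ?_⟩
  have hpos : 0 < e + 3 - 1 := by omega
  set i0 : Fin (e + 3 - 1) := ⟨0, hpos⟩ with hi0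
  refine ⟨fun i => if i = i0 then ![1, c, 0, 0] else ![1, 0, 0, 0], ?_⟩
  have hsum : (∑ i : Fin (e + 3 - 1), JF (if i = i0 then ![1, c, 0, 0]
      else ![1, 0, 0, 0])) = JF ![1, c, 0, 0] + (e + 1) • JF ![1, 0, 0, 0] := by
    rw [Fintype.sum_eq_add_sum_compl i0]
    simp only [if_pos rfl]
    congr 1
    rw [Finset.sum_congr rfl (g := fun _ => JF ![1, 0, 0, 0]) (fun i hi => by
        rw [if_neg (by simpa using hi)]),
      Finset.sum_const, Finset.card_compl, Finset.card_singleton, Fintype.card_fin]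
    congr 1
  rw [hsum, h0, h1]
  have : (JF ![1, c, 0, 0] + (e+1) • JF ![1, 0, 0, 0]) =
    !![n+2,0,0,0; 0,n+2,0,0; 0,0,n+2+c,-c^2; 0,0,n+2,n+2-c] := by
    rw [h0, h1]
    ext p q
    fin_cases p <;> fin_cases q <;>
      simp [Matrix.add_apply, Matrix.smul_apply, Matrix.vecHead, Matrix.vecTail] <;>
      try ring
  rw [← h0, ← h1, this]
  exact hdet0
end

section
/- Let d ≥ 2 and H = (0, 0, x₂^{d−1}x₄, x₁^{d−1}x₃ − x₂^{d−1}x₅, x₁^{d−1}x₄) over a field K of characteristic zero. Then for all points v₁,…,vₘ ∈ K⁵ (any m ≥ 1), the matrix ∑_{i=1}^{m} (JH)|_{x=vᵢ} is nilpotent. -/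
open MvPolynomial Finset

lemma nilp_aux (K : Type*) [CommRing K] (a b c e f h : K) :
    (!![0,0,0,0,0; 0,0,0,0,0; 0,a,0,b,0; c,e,f,0,-b; h,0,0,f,0] : Matrix (Fin 5) (Fin 5) K) ^ 4 = 0 := by
  set M : Matrix (Fin 5) (Fin 5) K := !![0,0,0,0,0; 0,0,0,0,0; 0,a,0,b,0; c,e,f,0,-b; h,0,0,f,0] with hM
  have h2 : M * M = !![0,0,0,0,0; 0,0,0,0,0; b*c,b*e,b*f,0,-(b*b); -(b*h),f*a,0,0,0; f*c,f*e,f*f,0,-(f*b)] := by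
    ext i j
    fin_cases i <;> fin_cases j <;>
      simp [hM, Matrix.mul_apply, Fin.sum_univ_five, Matrix.vecHead, Matrix.vecTail] <;> ring
  have h4 : M ^ 4 = (M * M) * (M * M) := by
    rw [show (4:ℕ) = 2*2 from rfl, pow_mul, sq, sq]
  rw [h4, h2]
  ext i j
  fin_cases i <;> fin_cases j <;>
    simp [Matrix.mul_apply, Fin.sum_univ_five, Matrix.vecHead, Matrix.vecTail] <;> ring

/-- For `d ≥ 2` and `H = (0, 0, x₂^(d-1) x₄, x₁^(d-1) x₃ - x₂^(d-1) x₅, x₁^(d-1) x₄)`,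
every sum of evaluations of the Jacobian `JH` at points of `K⁵` is nilpotent. -/
theorem stmt10 (K : Type*) [Field K] [CharZero K] (d : ℕ) (hd : 2 ≤ d)
    (H : Fin 5 → MvPolynomial (Fin 5) K)
    (hH : H = ![0, 0, X 1 ^ (d - 1) * X 3, X 0 ^ (d - 1) * X 2 - X 1 ^ (d - 1) * X 4,
      X 0 ^ (d - 1) * X 3]) :
    ∀ (m : ℕ), 1 ≤ m → ∀ v : Fin m → Fin 5 → K,
      IsNilpotent (∑ i, Matrix.of fun p q => eval (v i) (pderiv q (H p))) := by
  subst hH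
  intro m hm v
  refine ⟨4, ?_⟩
  have key : (∑ i, Matrix.of fun p q =>
        eval (v i) (pderiv q (![0, 0, X 1 ^ (d - 1) * X 3,
          X 0 ^ (d - 1) * X 2 - X 1 ^ (d - 1) * X 4, X 0 ^ (d - 1) * X 3] p))) =
      !![0,0,0,0,0; 0,0,0,0,0;
        0, ∑ x, v x 3 * (((d-1 : ℕ) : K) * v x 1 ^ (d-1-1)), 0, ∑ x, v x 1 ^ (d-1), 0;
        ∑ x, v x 2 * (((d-1 : ℕ) : K) * v x 0 ^ (d-1-1)),
          -∑ x, v x 4 * (((d-1 : ℕ) : K) * v x 1 ^ (d-1-1)),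
          ∑ x, v x 0 ^ (d-1), 0, -∑ x, v x 1 ^ (d-1);
        ∑ x, v x 3 * (((d-1 : ℕ) : K) * v x 0 ^ (d-1-1)), 0, 0, ∑ x, v x 0 ^ (d-1), 0] := by
    ext p q
    fin_cases p <;> fin_cases q <;>
      simp [Matrix.sum_apply, pderiv_mul, Matrix.vecHead, Matrix.vecTail, Finset.sum_neg_distrib]
  rw [key]
  exact nilp_aux K _ _ _ _ _ _
end

section
/- Let d ≥ 2 and H = (0, 0, x₂^{d−1}x₄, x₁^{d−1}x₃ − x₂^{d−1}x₅, x₁^{d−1}x₄) over a field K of characteristic zero. Then the product (JH)|_{x₁=0} · (JH)|_{x₂=0} is a lower triangular matrix with diagonal (0, 0, x₁^{d−1}x₂^{d−1}, −x₁^{d−1}x₂^{d−1}, 0); in particular this product is not nilpotent, so JH is not strongly nilpotent. -/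
open MvPolynomial Finset

set_option maxHeartbeats 2000000 in
/-- For `d ≥ 2` and `H = (0, 0, x₂^(d-1) x₄, x₁^(d-1) x₃ - x₂^(d-1) x₅, x₁^(d-1) x₄)`,
the product `(JH)|_{x₁=0} ⬝ (JH)|_{x₂=0}` is lower triangular with diagonal
`(0, 0, x₁^(d-1) x₂^(d-1), -x₁^(d-1) x₂^(d-1), 0)`; in particular it is not nilpotent,
so `JH` is not strongly nilpotent. -/
theorem stmt11 (K : Type*) [Field K] [CharZero K] (d : ℕ) (hd : 2 ≤ d)
    (H : Fin 5 → MvPolynomial (Fin 5) K)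
    (hH : H = ![0, 0, X 1 ^ (d - 1) * X 3, X 0 ^ (d - 1) * X 2 - X 1 ^ (d - 1) * X 4,
      X 0 ^ (d - 1) * X 3])
    (M₁ M₂ : Matrix (Fin 5) (Fin 5) (MvPolynomial (Fin 5) K))
    (hM₁ : M₁ = Matrix.of fun p q =>
      bind₁ (fun j : Fin 5 => if j = 0 then 0 else X j) (pderiv q (H p)))
    (hM₂ : M₂ = Matrix.of fun p q =>
      bind₁ (fun j : Fin 5 => if j = 1 then 0 else X j) (pderiv q (H p))) :
    (∀ p q : Fin 5, p < q → (M₁ * M₂) p q = 0) ∧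
    (∀ p : Fin 5, (M₁ * M₂) p p =
      ![0, 0, X 0 ^ (d - 1) * X 1 ^ (d - 1), -(X 0 ^ (d - 1) * X 1 ^ (d - 1)), 0] p) ∧
    ¬ IsNilpotent (M₁ * M₂) := by
  have h1 : d - 1 ≠ 0 := by omega
  subst hH hM₁ hM₂
  refine ⟨?_, ?_, ?_⟩
  · intro p q hpq
    fin_cases p <;> fin_cases q <;> simp_all <;>
      simp [Matrix.mul_apply, Fin.sum_univ_five, Derivation.leibniz, Derivation.leibniz_pow,
        pderiv_X, Pi.single_apply, bind₁_X_right, zero_pow h1, sub_mul]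
  · intro p
    fin_cases p <;>
      simp [Matrix.mul_apply, Fin.sum_univ_five, Derivation.leibniz, Derivation.leibniz_pow,
        pderiv_X, Pi.single_apply, bind₁_X_right, zero_pow h1, sub_mul] <;> ring
  · intro hnil
    let φ : MvPolynomial (Fin 5) K →+* K := ↑(aeval (R := K) (![1,1,0,0,0] : Fin 5 → K))
    have e : φ.mapMatrix (Matrix.of (fun p q =>
        bind₁ (fun j : Fin 5 => if j = 0 then 0 else X j) (pderiv q
          ((![0, 0, X 1 ^ (d - 1) * X 3, X 0 ^ (d - 1) * X 2 - X 1 ^ (d - 1) * X 4,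
            X 0 ^ (d - 1) * X 3] : Fin 5 → MvPolynomial (Fin 5) K) p))) *
        Matrix.of (fun p q =>
        bind₁ (fun j : Fin 5 => if j = 1 then 0 else X j) (pderiv q
          ((![0, 0, X 1 ^ (d - 1) * X 3, X 0 ^ (d - 1) * X 2 - X 1 ^ (d - 1) * X 4,
            X 0 ^ (d - 1) * X 3] : Fin 5 → MvPolynomial (Fin 5) K) p)))) = Matrix.diagonal ![0,0,1,-1,0] := by
      rw [map_mul]
      ext p q
      fin_cases p <;> fin_cases q <;>
        simp [φ, Matrix.mul_apply, Fin.sum_univ_five, RingHom.mapMatrix_apply, Matrix.map_apply,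
          Derivation.leibniz, Derivation.leibniz_pow, pderiv_X, Pi.single_apply,
          aeval_bind₁, zero_pow h1, sub_mul, Matrix.diagonal, Matrix.vecHead, Matrix.vecTail]
    have hmap := hnil.map φ.mapMatrix
    rw [e] at hmap
    obtain ⟨n, hn⟩ := hmap
    rw [Matrix.diagonal_pow] at hn
    have h22 := congrFun (congrFun hn 2) 2
    simp [Matrix.diagonal] at h22
end

section
/- Let K have characteristic zero, let d ≥ 1 and let a₁,…,a_{2d+2} ∈ Kⁿ be pairwise linearly independent vectors such that for all j ≥ min{3, d²} and all k with 3 ≤ k ≤ d+2, the set {aⱼ, a_k, a_{k+d}} consists of two or three linearly independent vectors (two if j ∈ {k, k+d}, three otherwise). If ∑_{i=1}^{2d+2} λᵢ·(aᵢᵀx)^d = 0 in K[x₁,…,xₙ] with λᵢ ∈ K not all zero, then λ₁ ≠ 0 and λ₂ ≠ 0. -/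
open MvPolynomial Finset

/-!
Write `L_a` for the linear form `x ↦ aᵀx`. Differentiating along a functional `f` sends
`L_a ^ (m + 1)` to `(m + 1) f(a) L_a ^ m`; so, the characteristic being zero, `d - 1` derivatives
along `f_k` turn a relation `∑ cᵢ L_{aᵢ} ^ d = 0` into the vector relation
`∑ cᵢ (∏ f_k(aᵢ)) aᵢ = 0`.

For `d = 1` the relation is linear, and `λ₁ = 0` (or `λ₂ = 0`) contradicts the independence of
the three remaining vectors. For `d ≥ 2`, if `λ₁ = 0` (symmetrically `λ₂ = 0`) the relation involves
`w = a₂` and the `d` independent pairs `a_k, a_{k+d}`. To isolate one pair, differentiate along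
functionals each vanishing on one of the other pairs but not on the isolated one (they exist as
`K` is infinite). If `w` lies in the span of no pair, these functionals can also be kept nonzero
on `w`, and independence of `w, a_k, a_{k+d}` kills all coefficients. If `w = α a_k + β a_{k+d}`,
isolating any other pair kills `w` too, so only the binary relation
`μ L_w ^ d + c L_{a_k} ^ d + c' L_{a_{k+d}} ^ d = 0` survives; there `d - 1` derivatives along a
functional vanishing on `a_{k+d}` leave the coefficient `μ α ^ (d - 1) β` in front of `a_{k+d}`.
-/

theorem Submodule.exists_dual_forall_mem_eq_zero_forall_ne_zero {K V κ : Type*} [Field K]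
    [Infinite K] [AddCommGroup V] [Module K V] [Finite κ] {W : Submodule K V} {z : κ → V}
    (hz : ∀ i, z i ∉ W) :
    ∃ f : Module.Dual K V, (∀ y ∈ W, f y = 0) ∧ ∀ i, f (z i) ≠ 0 := by
  let E := W.dualAnnihilator
  let p : κ → Subspace K E := fun i => LinearMap.ker ((Module.Dual.eval K V (z i)).comp E.subtype)
  have hp : ∀ i, p i ≠ ⊤ := by
    intro i htop
    obtain ⟨f, hfz, hfW⟩ := W.exists_dual_map_eq_bot_of_notMem (hz i) inferInstance
    have hfE : f ∈ E := (Submodule.mem_dualAnnihilator _).mpr fun y hy =>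
      LinearMap.le_ker_iff_map.mpr hfW hy
    exact hfz (LinearMap.mem_ker.mp (htop ▸ Submodule.mem_top : (⟨f, hfE⟩ : E) ∈ p i))
  obtain ⟨⟨f, hfE⟩, hf⟩ : ∃ f : E, ∀ i, f ∉ p i := by
    by_contra! h
    obtain ⟨i, hi⟩ := Subspace.exists_eq_top_of_iUnion_eq_univ
      (Set.eq_univ_of_forall fun f => Set.mem_iUnion.mpr (h f))
    exact hp i hi
  exact ⟨f, (Submodule.mem_dualAnnihilator _).mp hfE, hf⟩

section

variable {K σ ι : Type*} [Field K] [Fintype σ] [DecidableEq σ]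

noncomputable def linearForm : (σ → K) →ₗ[K] MvPolynomial σ K where
  toFun x := ∑ t, C (x t) * X t
  map_add' x y := by simp only [Pi.add_apply, C_add, add_mul, sum_add_distrib]
  map_smul' c x := by simp only [Pi.smul_apply, smul_eq_mul, C_mul, mul_assoc, mul_sum,
    RingHom.id_apply, smul_eq_C_mul]

noncomputable def linearFormCoeffs : MvPolynomial σ K →ₗ[K] (σ → K) :=
  LinearMap.pi fun t => lcoeff K (Finsupp.single t 1)

theorem linearFormCoeffs_linearForm (x : σ → K) :
    linearFormCoeffs (linearForm x) = x := by
  ext t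
  simp [linearFormCoeffs, linearForm, coeff_C_mul, coeff_X,
    Finsupp.single_left_inj one_ne_zero]

theorem linearForm_injective : Function.Injective (linearForm : (σ → K) → MvPolynomial σ K) :=
  Function.LeftInverse.injective linearFormCoeffs_linearForm

noncomputable def derivationAlong (f : Module.Dual K (σ → K)) :
    Derivation K (MvPolynomial σ K) (MvPolynomial σ K) :=
  mkDerivation K fun t => C (f (Pi.single t 1))

theorem derivationAlong_linearForm (f : Module.Dual K (σ → K)) (x : σ → K) :
    derivationAlong f (linearForm x) = C (f x) := by
  have hf : f x = ∑ t, x t * f (Pi.single t 1) := by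
    conv_lhs => rw [← univ_sum_single x]
    simp only [map_sum]
    refine sum_congr rfl fun t _ => ?_
    rw [← smul_eq_mul, ← map_smul, ← Pi.single_smul, smul_eq_mul, mul_one]
  simp [derivationAlong, linearForm, mkDerivation_X, hf]

theorem exists_linearMap_linearForm_pow [CharZero K] (S : Finset ι)
    (f : ι → Module.Dual K (σ → K)) (m : ℕ) :
    ∃ Φ : MvPolynomial σ K →ₗ[K] MvPolynomial σ K,
      ∀ x, Φ (linearForm x ^ (m + #S)) = (∏ k ∈ S, f k x) • linearForm x ^ m := by
  induction S using Finset.cons_induction with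
  | empty => exact ⟨LinearMap.id, fun x => by simp⟩
  | cons k S hk ih =>
    obtain ⟨Φ, hΦ⟩ := ih
    refine ⟨((m + #S + 1 : ℕ) : K)⁻¹ • Φ ∘ₗ (derivationAlong (f k)).toLinearMap, fun x => ?_⟩
    have hN : ((m + #S + 1 : ℕ) : K) ≠ 0 := Nat.cast_ne_zero.mpr (Nat.succ_ne_zero _)
    rw [card_cons, ← add_assoc, LinearMap.smul_apply, LinearMap.comp_apply,
      Derivation.coeFn_coe, Derivation.leibniz_pow, derivationAlong_linearForm, Nat.add_sub_cancel,
      smul_eq_mul, mul_comm, ← smul_eq_C_mul, ← Nat.cast_smul_eq_nsmul K, map_smul, map_smul, hΦ,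
      smul_smul, smul_smul, smul_smul, inv_mul_cancel₀ hN, one_mul, prod_cons]

theorem exists_linearMap_linearForm_pow_succ [CharZero K] (S : Finset ι)
    (f : ι → Module.Dual K (σ → K)) :
    ∃ Ψ : MvPolynomial σ K →ₗ[K] (σ → K),
      ∀ x, Ψ (linearForm x ^ (#S + 1)) = (∏ k ∈ S, f k x) • x := by
  obtain ⟨Φ, hΦ⟩ := exists_linearMap_linearForm_pow S f 1
  refine ⟨linearFormCoeffs ∘ₗ Φ, fun x => ?_⟩
  rw [LinearMap.comp_apply, add_comm, hΦ, pow_one, map_smul, linearFormCoeffs_linearForm]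

theorem linearIndependent_vecCons_pair_iff {V : Type*} [AddCommGroup V] [Module K V]
    {x y z : V} :
    LinearIndependent K ![z, x, y] ↔
      LinearIndependent K ![x, y] ∧ z ∉ Submodule.span K {x, y} := by
  rw [← Matrix.range_cons_cons_empty x y ![]]
  exact linearIndependent_finCons

theorem LinearIndependent.eq_zero_of_smul_add_smul_add_smul {V : Type*} [AddCommGroup V]
    [Module K V] {x y z : V} (h : LinearIndependent K ![x, y, z]) {a b c : K}
    (hs : a • x + b • y + c • z = 0) : a = 0 ∧ b = 0 ∧ c = 0 := by
  have h3 := Fintype.linearIndependent_iff.mp h ![a, b, c] (by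
    rw [Fin.sum_univ_three]
    exact hs)
  exact ⟨h3 0, h3 1, h3 2⟩

theorem eq_zero_of_smul_linearForm_pow_add [CharZero K] {d : ℕ} (hd : 2 ≤ d) {u v w : σ → K}
    {α β μ c c' : K} (huv : LinearIndependent K ![u, v]) (hα : α ≠ 0) (hβ : β ≠ 0)
    (hw : α • u + β • v = w)
    (h : μ • linearForm w ^ d + c • linearForm u ^ d + c' • linearForm v ^ d = 0) :
    μ = 0 ∧ c = 0 := by
  have hu : u ∉ Submodule.span K {v} := by
    intro hu
    obtain ⟨r, rfl⟩ := Submodule.mem_span_singleton.mp hu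
    exact one_ne_zero (LinearIndependent.pair_iff.mp huv 1 (-r) (by module)).1
  obtain ⟨g, hgv, hgu⟩ := Submodule.exists_dual_forall_mem_eq_zero_forall_ne_zero
    (W := Submodule.span K {v}) (z := ![u]) (by simpa using hu)
  replace hgu : g u ≠ 0 := hgu 0
  obtain ⟨Ψ, hΨ⟩ := exists_linearMap_linearForm_pow_succ (range (d - 1)) fun _ => g
  simp only [prod_const, card_range] at hΨ
  have h' := congrArg Ψ h
  rw [show d = d - 1 + 1 by omega] at h'
  simp only [map_add, map_smul, hΨ, map_zero] at h'
  have key : (μ * (α * g u) ^ (d - 1) * α + c * g u ^ (d - 1)) • u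
      + (μ * (α * g u) ^ (d - 1) * β) • v = 0 := by
    rw [← h', ← hw]
    simp [hgv v (Submodule.mem_span_singleton_self v), zero_pow (show d - 1 ≠ 0 by omega)]
    module
  obtain ⟨h1, h2⟩ := LinearIndependent.pair_iff.mp huv _ _ key
  have hμ : μ = 0 := by simpa [hα, hβ, hgu] using h2
  exact ⟨hμ, by simpa [hμ, hgu] using h1⟩

section Pairs

variable [CharZero K] [DecidableEq ι] {d : ℕ} {P : Finset ι} {u v : ι → σ → K} {w : σ → K}
  {μ : K} {c c' : ι → K}

theorem smul_add_smul_add_smul_eq_zero_of_vanishing_on_other_pairs (hP : #P = d)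
    (h : μ • linearForm w ^ d +
      ∑ k ∈ P, (c k • linearForm (u k) ^ d + c' k • linearForm (v k) ^ d) = 0)
    {k₀ : ι} (hk₀ : k₀ ∈ P) (f : ι → Module.Dual K (σ → K))
    (hf : ∀ k ∈ P.erase k₀, f k (u k) = 0 ∧ f k (v k) = 0) :
    (μ * ∏ k ∈ P.erase k₀, f k w) • w + (c k₀ * ∏ k ∈ P.erase k₀, f k (u k₀)) • u k₀ +
      (c' k₀ * ∏ k ∈ P.erase k₀, f k (v k₀)) • v k₀ = 0 := by
  obtain ⟨Ψ, hΨ⟩ := exists_linearMap_linearForm_pow_succ (P.erase k₀) f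
  have h' := congrArg Ψ h
  rw [← hP, ← card_erase_add_one hk₀] at h'
  simp only [map_add, map_sum, map_smul, hΨ, smul_smul, map_zero] at h'
  rwa [sum_eq_single k₀ (fun k hk hne => ?_) (absurd hk₀), ← add_assoc] at h'
  have hk : k ∈ P.erase k₀ := mem_erase.mpr ⟨hne, hk⟩
  rw [prod_eq_zero hk (f := fun j => f j (u k)) (hf k hk).1,
    prod_eq_zero hk (f := fun j => f j (v k)) (hf k hk).2]
  simp

theorem eq_zero_of_ne_of_mem_span_pair (hP : #P = d)
    (huv : ∀ k ∈ P, LinearIndependent K ![u k, v k])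
    (hsep : ∀ k ∈ P, ∀ k' ∈ P, k ≠ k' →
      u k' ∉ Submodule.span K {u k, v k} ∧ v k' ∉ Submodule.span K {u k, v k})
    (h : μ • linearForm w ^ d +
      ∑ k ∈ P, (c k • linearForm (u k) ^ d + c' k • linearForm (v k) ^ d) = 0)
    {k₁ : ι} (hk₁ : k₁ ∈ P) (hwk₁ : w ∈ Submodule.span K {u k₁, v k₁})
    {k₀ : ι} (hk₀ : k₀ ∈ P) (hne : k₀ ≠ k₁) : c k₀ = 0 ∧ c' k₀ = 0 := by
  choose! f hfW hfZ using fun k (hk : k ∈ P.erase k₀) =>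
    Submodule.exists_dual_forall_mem_eq_zero_forall_ne_zero
      (W := Submodule.span K {u k, v k}) (z := ![u k₀, v k₀])
      (by simpa [Fin.forall_fin_two] using
        hsep k (mem_of_mem_erase hk) k₀ hk₀ (ne_of_mem_erase hk))
  have hrel := smul_add_smul_add_smul_eq_zero_of_vanishing_on_other_pairs hP h hk₀ f
    fun k hk => ⟨hfW k hk _ (Submodule.subset_span (by simp)),
      hfW k hk _ (Submodule.subset_span (by simp))⟩
  have hk₁' : k₁ ∈ P.erase k₀ := mem_erase.mpr ⟨hne.symm, hk₁⟩
  rw [prod_eq_zero hk₁' (hfW k₁ hk₁' w hwk₁), mul_zero, zero_smul, zero_add] at hrel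
  obtain ⟨h₁, h₂⟩ := LinearIndependent.pair_iff.mp (huv k₀ hk₀) _ _ hrel
  exact ⟨(mul_eq_zero.mp h₁).resolve_right (prod_ne_zero_iff.mpr fun k hk => hfZ k hk 0),
    (mul_eq_zero.mp h₂).resolve_right (prod_ne_zero_iff.mpr fun k hk => hfZ k hk 1)⟩

theorem eq_zero_of_mem_span_pair (hd : 2 ≤ d) (hP : #P = d)
    (hw : ∀ k ∈ P, LinearIndependent K ![w, u k] ∧ LinearIndependent K ![w, v k])
    (huv : ∀ k ∈ P, LinearIndependent K ![u k, v k])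
    (hsep : ∀ k ∈ P, ∀ k' ∈ P, k ≠ k' →
      u k' ∉ Submodule.span K {u k, v k} ∧ v k' ∉ Submodule.span K {u k, v k})
    (h : μ • linearForm w ^ d +
      ∑ k ∈ P, (c k • linearForm (u k) ^ d + c' k • linearForm (v k) ^ d) = 0)
    {k₁ : ι} (hk₁ : k₁ ∈ P) (hwk₁ : w ∈ Submodule.span K {u k₁, v k₁}) :
    μ = 0 ∧ ∀ k ∈ P, c k = 0 ∧ c' k = 0 := by
  have hother := fun k₀ (hk₀ : k₀ ∈ P) (hne : k₀ ≠ k₁) =>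
    eq_zero_of_ne_of_mem_span_pair hP huv hsep h hk₁ hwk₁ hk₀ hne
  have h₁ : μ • linearForm w ^ d + c k₁ • linearForm (u k₁) ^ d +
      c' k₁ • linearForm (v k₁) ^ d = 0 := by
    rwa [sum_eq_single k₁ (fun k hk hne => by simp [hother k hk hne]) (absurd hk₁),
      ← add_assoc] at h
  obtain ⟨α, β, hαβ⟩ := Submodule.mem_span_pair.mp hwk₁
  have hα : α ≠ 0 := by
    rintro rfl
    exact one_ne_zero (LinearIndependent.pair_iff.mp (hw k₁ hk₁).2 1 (-β)
      (by rw [← hαβ]; module)).1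
  have hβ : β ≠ 0 := by
    rintro rfl
    exact one_ne_zero (LinearIndependent.pair_iff.mp (hw k₁ hk₁).1 1 (-α)
      (by rw [← hαβ]; module)).1
  obtain ⟨hμ, hc⟩ := eq_zero_of_smul_linearForm_pow_add hd (huv k₁ hk₁) hα hβ hαβ h₁
  have hvu : LinearIndependent K ![v k₁, u k₁] := LinearIndependent.pair_symm_iff.mp (huv k₁ hk₁)
  have hβα : β • v k₁ + α • u k₁ = w := by rw [add_comm]; exact hαβ
  have h₁' : μ • linearForm w ^ d + c' k₁ • linearForm (v k₁) ^ d +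
      c k₁ • linearForm (u k₁) ^ d = 0 := by rw [add_right_comm]; exact h₁
  obtain ⟨-, hc'⟩ := eq_zero_of_smul_linearForm_pow_add hd hvu hβ hα hβα h₁'
  refine ⟨hμ, fun k hk => ?_⟩
  rcases eq_or_ne k k₁ with rfl | hne
  · exact ⟨hc, hc'⟩
  · exact hother k hk hne

theorem eq_zero_of_forall_notMem_span_pair (hd : 2 ≤ d) (hP : #P = d)
    (huv : ∀ k ∈ P, LinearIndependent K ![u k, v k])
    (hsep : ∀ k ∈ P, ∀ k' ∈ P, k ≠ k' →
      u k' ∉ Submodule.span K {u k, v k} ∧ v k' ∉ Submodule.span K {u k, v k})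
    (h : μ • linearForm w ^ d +
      ∑ k ∈ P, (c k • linearForm (u k) ^ d + c' k • linearForm (v k) ^ d) = 0)
    (hwP : ∀ k ∈ P, w ∉ Submodule.span K {u k, v k}) :
    μ = 0 ∧ ∀ k ∈ P, c k = 0 ∧ c' k = 0 := by
  have hall : ∀ k₀ ∈ P, μ = 0 ∧ c k₀ = 0 ∧ c' k₀ = 0 := by
    intro k₀ hk₀
    choose! f hfW hfZ using fun k (hk : k ∈ P.erase k₀) =>
      Submodule.exists_dual_forall_mem_eq_zero_forall_ne_zero
        (W := Submodule.span K {u k, v k}) (z := ![w, u k₀, v k₀])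
        (by simpa [Fin.forall_fin_succ, hwP k (mem_of_mem_erase hk)] using
          hsep k (mem_of_mem_erase hk) k₀ hk₀ (ne_of_mem_erase hk))
    have hrel := smul_add_smul_add_smul_eq_zero_of_vanishing_on_other_pairs hP h hk₀ f
      fun k hk => ⟨hfW k hk _ (Submodule.subset_span (by simp)),
        hfW k hk _ (Submodule.subset_span (by simp))⟩
    have hli := linearIndependent_vecCons_pair_iff.mpr ⟨huv k₀ hk₀, hwP k₀ hk₀⟩
    obtain ⟨h₀, h₁, h₂⟩ := hli.eq_zero_of_smul_add_smul_add_smul hrel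
    have hprod : ∀ i, ∏ k ∈ P.erase k₀, f k (![w, u k₀, v k₀] i) ≠ 0 :=
      fun i => prod_ne_zero_iff.mpr fun k hk => hfZ k hk i
    exact ⟨(mul_eq_zero.mp h₀).resolve_right (hprod 0),
      (mul_eq_zero.mp h₁).resolve_right (hprod 1), (mul_eq_zero.mp h₂).resolve_right (hprod 2)⟩
  obtain ⟨k₀, hk₀⟩ : P.Nonempty := card_pos.mp (by omega)
  exact ⟨(hall k₀ hk₀).1, fun k hk => (hall k hk).2⟩

theorem eq_zero_of_smul_linearForm_pow_add_sum_pairs (hd : 2 ≤ d) (hP : #P = d)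
    (hw : ∀ k ∈ P, LinearIndependent K ![w, u k] ∧ LinearIndependent K ![w, v k])
    (huv : ∀ k ∈ P, LinearIndependent K ![u k, v k])
    (hsep : ∀ k ∈ P, ∀ k' ∈ P, k ≠ k' →
      u k' ∉ Submodule.span K {u k, v k} ∧ v k' ∉ Submodule.span K {u k, v k})
    (h : μ • linearForm w ^ d +
      ∑ k ∈ P, (c k • linearForm (u k) ^ d + c' k • linearForm (v k) ^ d) = 0) :
    μ = 0 ∧ ∀ k ∈ P, c k = 0 ∧ c' k = 0 := by
  by_cases hwP : ∃ k ∈ P, w ∈ Submodule.span K {u k, v k}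
  · obtain ⟨k₁, hk₁, hwk₁⟩ := hwP
    exact eq_zero_of_mem_span_pair hd hP hw huv hsep h hk₁ hwk₁
  · push Not at hwP
    exact eq_zero_of_forall_notMem_span_pair hd hP huv hsep h hwP

end Pairs

theorem sum_Icc_one_two_mul_add_two {M : Type*} [AddCommMonoid M] (d : ℕ) (g : ℕ → M) :
    ∑ i ∈ Icc 1 (2 * d + 2), g i = g 1 + g 2 + ∑ k ∈ Icc 3 (d + 2), (g k + g (k + d)) := by
  have hIcc :
      Icc 1 (2 * d + 2) = insert 1 (insert 2 (Icc 3 (d + 2) ∪ Icc (3 + d) (d + 2 + d))) := by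
    ext i
    simp only [mem_insert, mem_union, mem_Icc]
    omega
  have hshift : ∑ k ∈ Icc 3 (d + 2), g (k + d) = ∑ i ∈ Icc (3 + d) (d + 2 + d), g i := by
    rw [← image_add_right_Icc, sum_image fun _ _ _ _ => Nat.add_right_cancel]
  have hdisj : Disjoint (Icc 3 (d + 2)) (Icc (3 + d) (d + 2 + d)) :=
    disjoint_left.mpr fun i hi hi' => by simp only [mem_Icc] at hi hi'; omega
  rw [sum_add_distrib, hshift, ← sum_union hdisj, hIcc, sum_insert (by simp; omega),
    sum_insert (by simp; omega)]
  exact (add_assoc _ _ _).symm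

theorem forall_mem_Icc_one_two_mul_add_two {d : ℕ} {p : ℕ → Prop} (h₁ : p 1) (h₂ : p 2)
    (h : ∀ k ∈ Icc 3 (d + 2), p k ∧ p (k + d)) : ∀ i ∈ Icc 1 (2 * d + 2), p i := by
  intro i hi
  rw [mem_Icc] at hi
  rcases (show i = 1 ∨ i = 2 ∨ i ∈ Icc 3 (d + 2) ∨ i - d ∈ Icc 3 (d + 2) by simp; omega)
    with rfl | rfl | hi' | hi'
  · exact h₁
  · exact h₂
  · exact (h i hi').1
  · have := (h _ hi').2
    rw [mem_Icc] at hi'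
    rwa [Nat.sub_add_cancel (by omega)] at this

theorem ne_zero_of_sum_Icc_one_four_smul_eq_zero {V : Type*} [AddCommGroup V] [Module K V]
    (x : ℕ → V) (l : ℕ → K) (h₁ : LinearIndependent K ![x 1, x 3, x 4])
    (h₂ : LinearIndependent K ![x 2, x 3, x 4]) (hsum : ∑ i ∈ Icc 1 4, l i • x i = 0)
    (hnz : ∃ i ∈ Icc 1 4, l i ≠ 0) : l 1 ≠ 0 ∧ l 2 ≠ 0 := by
  have hIcc : Icc 1 4 = {1, 2, 3, 4} := rfl
  rw [hIcc, sum_insert (by decide), sum_insert (by decide), sum_insert (by decide),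
    sum_singleton] at hsum
  obtain ⟨i, hi, hli⟩ := hnz
  simp only [hIcc, mem_insert, mem_singleton] at hi
  refine ⟨fun hl₁ => hli ?_, fun hl₂ => hli ?_⟩
  · rw [hl₁, zero_smul, zero_add, ← add_assoc] at hsum
    obtain ⟨hl₂, hl₃, hl₄⟩ := h₂.eq_zero_of_smul_add_smul_add_smul hsum
    rcases hi with rfl | rfl | rfl | rfl <;> assumption
  · rw [hl₂, zero_smul, zero_add, ← add_assoc] at hsum
    obtain ⟨hl₁, hl₃, hl₄⟩ := h₁.eq_zero_of_smul_add_smul_add_smul hsum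
    rcases hi with rfl | rfl | rfl | rfl <;> assumption

theorem ne_zero_of_sum_Icc_smul_linearForm_pow_eq_zero [CharZero K] {d : ℕ} (hd : 2 ≤ d)
    (a : ℕ → σ → K)
    (hpair : ∀ i ∈ Icc 1 (2 * d + 2), ∀ j ∈ Icc 1 (2 * d + 2), i ≠ j →
      LinearIndependent K ![a i, a j])
    (htriple : ∀ j ∈ Icc 3 (2 * d + 2), ∀ k ∈ Icc 3 (d + 2),
      ((j = k ∨ j = k + d) → LinearIndependent K ![a k, a (k + d)]) ∧
      ((j ≠ k ∧ j ≠ k + d) → LinearIndependent K ![a j, a k, a (k + d)]))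
    (l : ℕ → K) (hsum : ∑ i ∈ Icc 1 (2 * d + 2), l i • linearForm (a i) ^ d = 0)
    (hnz : ∃ i ∈ Icc 1 (2 * d + 2), l i ≠ 0) :
    l 1 ≠ 0 ∧ l 2 ≠ 0 := by
  have hP : #(Icc 3 (d + 2)) = d := by rw [Nat.card_Icc]; omega
  have huv : ∀ k ∈ Icc 3 (d + 2), LinearIndependent K ![a k, a (k + d)] := fun k hk =>
    (htriple k (by simp only [mem_Icc] at hk ⊢; omega) k hk).1 (Or.inl rfl)
  have hsep : ∀ k ∈ Icc 3 (d + 2), ∀ k' ∈ Icc 3 (d + 2), k ≠ k' →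
      a k' ∉ Submodule.span K {a k, a (k + d)} ∧
        a (k' + d) ∉ Submodule.span K {a k, a (k + d)} := by
    intro k hk k' hk' hne
    simp only [mem_Icc] at hk hk'
    exact ⟨(linearIndependent_vecCons_pair_iff.mp
        ((htriple k' (by simp; omega) k (by simp; omega)).2 (by omega))).2,
      (linearIndependent_vecCons_pair_iff.mp
        ((htriple (k' + d) (by simp; omega) k (by simp; omega)).2 (by omega))).2⟩
  have hw : ∀ i ∈ Icc 1 2, ∀ k ∈ Icc 3 (d + 2),
      LinearIndependent K ![a i, a k] ∧ LinearIndependent K ![a i, a (k + d)] := by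
    intro i hi k hk
    simp only [mem_Icc] at hi hk
    exact ⟨hpair i (by simp; omega) k (by simp; omega) (by omega),
      hpair i (by simp; omega) (k + d) (by simp; omega) (by omega)⟩
  rw [sum_Icc_one_two_mul_add_two] at hsum
  obtain ⟨i, hi, hli⟩ := hnz
  refine ⟨fun hl₁ => hli ?_, fun hl₂ => hli ?_⟩
  · rw [hl₁, zero_smul, zero_add] at hsum
    obtain ⟨hl₂, hc⟩ := eq_zero_of_smul_linearForm_pow_add_sum_pairs hd hP (hw 2 (by simp)) huv
      hsep hsum
    exact forall_mem_Icc_one_two_mul_add_two (p := fun i => l i = 0) hl₁ hl₂ hc i hi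
  · rw [hl₂, zero_smul, add_zero] at hsum
    obtain ⟨hl₁, hc⟩ := eq_zero_of_smul_linearForm_pow_add_sum_pairs hd hP (hw 1 (by simp)) huv
      hsep hsum
    exact forall_mem_Icc_one_two_mul_add_two (p := fun i => l i = 0) hl₁ hl₂ hc i hi

end

/-- Lemma on powers of pairwise independent linear forms: with the stated independence
conditions on `a₁,…,a_{2d+2} ∈ Kⁿ`, if `∑_{i=1}^{2d+2} λᵢ (aᵢᵀ x)^d = 0` with the `λᵢ`
not all zero, then `λ₁ ≠ 0` and `λ₂ ≠ 0`. -/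
theorem stmt12 (K : Type*) [Field K] [CharZero K] (n d : ℕ) (hd : 1 ≤ d)
    (a : ℕ → Fin n → K)
    (hpair : ∀ i ∈ Icc 1 (2 * d + 2), ∀ j ∈ Icc 1 (2 * d + 2), i ≠ j →
      LinearIndependent K ![a i, a j])
    (htriple : ∀ j ∈ Icc (min 3 (d ^ 2)) (2 * d + 2), ∀ k ∈ Icc 3 (d + 2),
      ((j = k ∨ j = k + d) → LinearIndependent K ![a k, a (k + d)]) ∧
      ((j ≠ k ∧ j ≠ k + d) → LinearIndependent K ![a j, a k, a (k + d)]))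
    (l : ℕ → K)
    (hsum : ∑ i ∈ Icc 1 (2 * d + 2), C (l i) * (∑ t, C (a i t) * X t) ^ d =
      (0 : MvPolynomial (Fin n) K))
    (hnz : ∃ i ∈ Icc 1 (2 * d + 2), l i ≠ 0) :
    l 1 ≠ 0 ∧ l 2 ≠ 0 := by
  have hsum' : ∑ i ∈ Icc 1 (2 * d + 2), l i • linearForm (a i) ^ d = 0 := by
    simp only [smul_eq_C_mul]
    exact hsum
  obtain rfl | hd := hd.eq_or_lt
  · have hlin : ∑ i ∈ Icc 1 4, l i • a i = 0 :=
      linearForm_injective (by simpa [map_sum, map_smul] using hsum')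
    exact ne_zero_of_sum_Icc_one_four_smul_eq_zero a l
      ((htriple 1 (by simp) 3 (by simp)).2 (by simp))
      ((htriple 2 (by simp) 3 (by simp)).2 (by simp)) hlin hnz
  · exact ne_zero_of_sum_Icc_smul_linearForm_pow_eq_zero hd a hpair
      (fun j hj => htriple j (Icc_subset_Icc (min_le_left _ _) le_rfl hj)) l hsum' hnz
end

section
/- Let d ≥ 2 and define the polynomials H₃ = x₁^d − x₂^d, H_{2+i} = (x₁ + i·x₃)^d for i = 2,…,d, and H_{d+2+i} = (x₂ + i·x₃)^d for i = 1,…,d, in K[x₁,x₂,x₃] with char K = 0. Then d·(x₁ + x₃)^d = H₃ + ∑_{i=2}^{d} (−1)^i·C(d,i)·H_{i+2} − ∑_{i=1}^{d} (−1)^i·C(d,i)·H_{i+d+2}. -/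
/-!
Put `S(y) = ∑_{i=0}^d (-1)^i C(d,i) (y + i z)^d`. Expanding binomially, the coefficient of `y^k`
for `k ≥ 1` is a multiple of `∑_i (-1)^i C(d,i) i^(d-k)`, up to sign the `d`-th forward difference
at `0` of a polynomial of degree `< d`, hence zero; so `S` does not depend on `y`. The identity is
`S(x₁) = S(x₂)` for `z = x₃`, once the terms `i = 0, 1` of the first sum and `i = 0` of the second
are split off.
-/

open MvPolynomial Finset

section AlternatingSums

variable {R : Type*} [CommRing R]

theorem sum_range_neg_one_pow_mul_choose_mul_pow_eq_zero {m n : ℕ} (h : m < n) :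
    ∑ i ∈ range (n + 1), (-1 : R) ^ i * n.choose i * (i : R) ^ m = 0 := by
  have hΔ := congrFun (fwdDiff_iter_pow_eq_zero_of_lt (R := R) h) 0
  rw [fwdDiff_iter_eq_sum_shift, Pi.zero_apply] at hΔ
  rw [← neg_one_pow_mul_eq_zero_iff (n := n), ← hΔ, mul_sum]
  refine sum_congr rfl fun i hi => ?_
  have hsign : (-1 : R) ^ n = (-1) ^ (n - i) * (-1) ^ i := by
    rw [← pow_add, Nat.sub_add_cancel (mem_range_succ_iff.mp hi)]
  have hsq : (-1 : R) ^ i * (-1) ^ i = 1 := by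
    rw [← mul_pow, neg_one_mul, neg_neg, one_pow]
  rw [hsign, zsmul_eq_mul, zero_add, nsmul_one]
  push_cast
  linear_combination ((-1 : R) ^ (n - i) * n.choose i * (i : R) ^ m) * hsq

theorem sum_range_neg_one_pow_mul_choose_mul_add_mul_pow (d : ℕ) (y z : R) :
    ∑ i ∈ range (d + 1), (-1 : R) ^ i * d.choose i * (y + i * z) ^ d =
      ∑ i ∈ range (d + 1), (-1 : R) ^ i * d.choose i * (i * z) ^ d := by
  calc ∑ i ∈ range (d + 1), (-1 : R) ^ i * d.choose i * (y + i * z) ^ d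
      = ∑ k ∈ range (d + 1), y ^ k * z ^ (d - k) * d.choose k *
          ∑ i ∈ range (d + 1), (-1 : R) ^ i * d.choose i * (i : R) ^ (d - k) := by
        simp_rw [add_pow, mul_sum]
        rw [sum_comm]
        refine sum_congr rfl fun k _ => sum_congr rfl fun i _ => ?_
        ring
    _ = z ^ d * ∑ i ∈ range (d + 1), (-1 : R) ^ i * d.choose i * (i : R) ^ d := by
        rw [sum_eq_single 0]
        · simp
        · intro k hk hk0
          rw [sum_range_neg_one_pow_mul_choose_mul_pow_eq_zero (by grind), mul_zero]
        · simp
    _ = ∑ i ∈ range (d + 1), (-1 : R) ^ i * d.choose i * (i * z) ^ d := by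
        rw [mul_sum]
        refine sum_congr rfl fun i _ => ?_
        ring

end AlternatingSums

theorem stmt13_general (K : Type*) [Field K] (d : ℕ) (hd : 2 ≤ d) :
    (d : MvPolynomial (Fin 3) K) * (X 0 + X 2) ^ d =
      (X 0 ^ d - X 1 ^ d)
      + ∑ i ∈ Icc 2 d, (-1 : MvPolynomial (Fin 3) K) ^ i *
          (d.choose i : MvPolynomial (Fin 3) K) *
          (X 0 + (i : MvPolynomial (Fin 3) K) * X 2) ^ d
      - ∑ i ∈ Icc 1 d, (-1 : MvPolynomial (Fin 3) K) ^ i *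
          (d.choose i : MvPolynomial (Fin 3) K) *
          (X 1 + (i : MvPolynomial (Fin 3) K) * X 2) ^ d := by
  have key :=
    (sum_range_neg_one_pow_mul_choose_mul_add_mul_pow d (X 0) (X 2 : MvPolynomial (Fin 3) K)).trans
      (sum_range_neg_one_pow_mul_choose_mul_add_mul_pow d (X 1) (X 2)).symm
  have peel (f : ℕ → MvPolynomial (Fin 3) K) {a : ℕ} (ha : a ≤ d) :
      ∑ i ∈ Icc a d, f i = f a + ∑ i ∈ Icc (a + 1) d, f i := by
    rw [← insert_Icc_add_one_left_eq_Icc ha, sum_insert (by simp)]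
  rw [Nat.range_succ_eq_Icc_zero, peel _ d.zero_le, peel _ d.zero_le, zero_add,
    peel _ (by omega : 1 ≤ d)] at key
  simp only [Nat.choose_zero_right, Nat.choose_one_right, Nat.cast_zero, Nat.cast_one, pow_zero,
    pow_one, zero_mul, add_zero, one_mul, mul_one, Nat.reduceAdd] at key
  linear_combination -key

/-- For `d ≥ 2`, with `H₃ = x₁^d - x₂^d`, `H_{2+i} = (x₁ + i x₃)^d` for `2 ≤ i ≤ d` and
`H_{d+2+i} = (x₂ + i x₃)^d` for `1 ≤ i ≤ d`, we have
`d (x₁ + x₃)^d = H₃ + ∑_{i=2}^d (-1)^i C(d,i) H_{i+2} - ∑_{i=1}^d (-1)^i C(d,i) H_{i+d+2}`. -/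
theorem stmt13 (K : Type*) [Field K] [CharZero K] (d : ℕ) (hd : 2 ≤ d) :
    (d : MvPolynomial (Fin 3) K) * (X 0 + X 2) ^ d =
      (X 0 ^ d - X 1 ^ d)
      + ∑ i ∈ Icc 2 d, (-1 : MvPolynomial (Fin 3) K) ^ i *
          (d.choose i : MvPolynomial (Fin 3) K) *
          (X 0 + (i : MvPolynomial (Fin 3) K) * X 2) ^ d
      - ∑ i ∈ Icc 1 d, (-1 : MvPolynomial (Fin 3) K) ^ i *
          (d.choose i : MvPolynomial (Fin 3) K) *
          (X 1 + (i : MvPolynomial (Fin 3) K) * X 2) ^ d :=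
  stmt13_general K d hd
end

section
/- Let n ≥ 2 and let T ∈ GL_n(K) over a field K of characteristic zero. Suppose H : Kⁿ → Kⁿ is a polynomial map with H(0) = 0 such that the Jacobian of T⁻¹·H(Tx) is lower triangular with zeroes on the diagonal. Then there exist N ∈ ℕ, vectors b₁,…,b_N, c₁,…,c_N ∈ Kⁿ and positive integers d₁,…,d_N such that H = ∑_{i=1}^{N} (cᵢᵀx)^{dᵢ}·bᵢ and cⱼᵀbᵢ = 0 for all i ≥ j ≥ 1. -/
/-!
Conjugating by `T` turns `H` into `G = T⁻¹ H(Tx)`, and the triangularity of the Jacobian says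
that `Gₚ` involves only the variables `x_t` with `t < p`. In characteristic zero every polynomial
without constant term is a linear combination of powers of linear forms in its variables, by the
polarization identity `d! y₁⋯y_d = ∑_S (-1)^(d-|S|) (∑_{j∈S} y_j)^d`. Transforming back,
`H = T G(T⁻¹x)` is a sum of terms `(cᵀx)^d b` in which `b` is a multiple of the column `T e_p` and
`cᵀ = c'ᵀT⁻¹` with `c'` supported below `p`; hence `cⱼᵀbᵢ` vanishes whenever the block of `j` is
at most that of `i`, and listing the terms block by block gives the required order.
-/

open MvPolynomial Finset Matrix
open scoped Nat

section Polarization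

variable {ι R : Type*} [Fintype ι] [DecidableEq ι] [CommRing R]

theorem Finset.sum_superset_neg_one_pow_card_compl (s : Finset ι) :
    ∑ S with s ⊆ S, (-1 : R) ^ #Sᶜ = if s = univ then 1 else 0 := by
  have hcompl : ∑ S with s ⊆ S, (-1 : R) ^ #Sᶜ = ∑ U ∈ sᶜ.powerset, (-1 : R) ^ #U :=
    sum_nbij' compl compl (by simp) (by simp [subset_compl_comm]) (by simp) (by simp)
      (by simp)
  simp only [hcompl, ← compl_eq_empty_iff]
  exact_mod_cast congrArg (Int.cast : ℤ → R) sum_powerset_neg_one_pow_card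

theorem Finset.sum_neg_one_pow_mul_sum_pow_card (y : ι → R) :
    ∑ S : Finset ι, (-1 : R) ^ #Sᶜ * (∑ j ∈ S, y j) ^ Fintype.card ι =
      (Fintype.card ι)! * ∏ j, y j := by
  have expand (S : Finset ι) : (∑ j ∈ S, y j) ^ Fintype.card ι =
      ∑ g : ι → ι with univ.image g ⊆ S, ∏ i, y (g i) := by
    rw [← card_univ, ← prod_const, prod_univ_sum]
    congr 1
    ext g
    simp [Fintype.mem_piFinset, image_subset_iff]
  calc ∑ S : Finset ι, (-1 : R) ^ #Sᶜ * (∑ j ∈ S, y j) ^ Fintype.card ι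
      = ∑ g : ι → ι, (∑ S with univ.image g ⊆ S, (-1 : R) ^ #Sᶜ) * ∏ i, y (g i) := by
        simp_rw [expand, mul_sum, sum_filter, sum_mul]
        rw [sum_comm]
        simp_rw [ite_mul, zero_mul]
    _ = ∑ g : ι → ι, if univ.image g = univ then ∏ i, y (g i) else 0 := by
        simp_rw [sum_superset_neg_one_pow_card_compl, ite_mul, one_mul, zero_mul]
    _ = ∑ σ : Equiv.Perm ι, ∏ i, y (σ i) := by
        refine (Fintype.sum_of_injective _ DFunLike.coe_injective _ _ ?_ fun σ => ?_).symm
        · intro g hg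
          rw [if_neg]
          intro himage
          have hsurj : Function.Surjective g := fun x => by
            obtain ⟨a, -, ha⟩ := mem_image.mp (himage ▸ mem_univ x)
            exact ⟨a, ha⟩
          exact hg ⟨Equiv.ofBijective g (Finite.surjective_iff_bijective.mp hsurj), rfl⟩
        · rw [if_pos (image_univ_of_surjective σ.surjective)]
    _ = (Fintype.card ι)! * ∏ j, y j := by
        simp_rw [Equiv.prod_comp, sum_const, card_univ, Fintype.card_perm, nsmul_eq_mul]

end Polarization

namespace MvPolynomial

section LinearSubst

variable {σ R : Type*} [Fintype σ] [CommSemiring R]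

noncomputable def linearForm (c : σ → R) : MvPolynomial σ R := ∑ t, C (c t) * X t

/-- The substitution `f(x) ↦ f(A x)`. -/
noncomputable def linearSubst (A : Matrix σ σ R) : MvPolynomial σ R →ₐ[R] MvPolynomial σ R :=
  bind₁ fun t => linearForm (A t)

theorem linearSubst_linearForm (A : Matrix σ σ R) (c : σ → R) :
    linearSubst A (linearForm c) = linearForm (c ᵥ* A) := by
  simp only [linearSubst, linearForm, map_sum, map_mul, algHom_C, algebraMap_eq, bind₁_X_right,
    mul_sum, vecMul, dotProduct, sum_mul, mul_assoc]
  exact sum_comm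

theorem linearSubst_linearSubst (A B : Matrix σ σ R) (f : MvPolynomial σ R) :
    linearSubst A (linearSubst B f) = linearSubst (B * A) f := by
  rw [linearSubst, linearSubst, linearSubst, bind₁_bind₁]
  congr 2
  funext t
  exact linearSubst_linearForm A (B t)

theorem linearSubst_one [DecidableEq σ] (f : MvPolynomial σ R) : linearSubst 1 f = f := by
  have : (fun t => linearForm ((1 : Matrix σ σ R) t)) = X := by
    funext t
    simp [linearForm, Matrix.one_apply, apply_ite C, ite_mul]
  rw [linearSubst, this, bind₁_X_left, AlgHom.id_apply]

theorem constantCoeff_linearSubst (A : Matrix σ σ R) (f : MvPolynomial σ R) :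
    constantCoeff (linearSubst A f) = constantCoeff f := by
  rw [← eval_zero, linearSubst, eval, eval₂Hom_bind₁]
  congr
  funext t
  simp [linearForm]

end LinearSubst

theorem notMem_vars_of_pderiv_eq_zero {σ R : Type*} [CommSemiring R] [NoZeroDivisors R]
    [CharZero R] {i : σ} {f : MvPolynomial σ R} (h : pderiv i f = 0) : i ∉ f.vars := by
  classical
  intro hi
  obtain ⟨m, hm, hmi⟩ := (mem_vars_iff_mem_support i).mp hi
  have hle : Finsupp.single i 1 ≤ m :=
    Finsupp.single_le_iff.mpr (Nat.one_le_iff_ne_zero.mpr (Finsupp.mem_support_iff.mp hmi))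
  have hcoeff := coeff_pderiv (i := i) f (m - Finsupp.single i 1)
  rw [h, coeff_zero, tsub_add_cancel_of_le hle, eq_comm] at hcoeff
  exact mem_support_iff.mp hm
    ((mul_eq_zero.mp hcoeff).resolve_right (Nat.cast_add_one_ne_zero _))

section LinearFormPowers

variable {σ K : Type*} [Fintype σ] [Field K]

def linearFormPowers (s : Set σ) : Set (MvPolynomial σ K) :=
  {f | ∃ (c : σ → K) (d : ℕ), (∀ t ∉ s, c t = 0) ∧ 0 < d ∧ f = linearForm c ^ d}

theorem exists_eq_sum_of_mem_span_linearFormPowers {s : Set σ} {f : MvPolynomial σ K}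
    (hf : f ∈ Submodule.span K (linearFormPowers s)) :
    ∃ (N : ℕ) (a : Fin N → K) (c : Fin N → σ → K) (d : Fin N → ℕ),
      (∀ i, ∀ t ∉ s, c i t = 0) ∧ (∀ i, 0 < d i) ∧
      f = ∑ i, C (a i) * linearForm (c i) ^ d i := by
  obtain ⟨N, a, g, rfl⟩ := Submodule.mem_span_set'.mp hf
  choose c d hc hd hg using fun i => (g i).2
  exact ⟨N, a, c, d, hc, hd, sum_congr rfl fun i _ => by rw [hg i, smul_eq_C_mul]⟩

variable [CharZero K]

theorem monomial_one_mem_span_linearFormPowers {s : Set σ} {m : σ →₀ ℕ}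
    (hm : m ≠ 0) (hms : ↑m.support ⊆ s) :
    monomial m (1 : K) ∈ Submodule.span K (linearFormPowers s) := by
  classical
  let ι := Σ t, Fin (m t)
  set d := Fintype.card ι
  have hd : 0 < d := by
    obtain ⟨t, ht⟩ := Finsupp.ne_iff.mp hm
    exact Fintype.card_pos_iff.mpr ⟨⟨t, ⟨0, Nat.pos_of_ne_zero ht⟩⟩⟩
  have hprod : ∏ j : ι, (X j.1 : MvPolynomial σ K) = monomial m 1 := by
    rw [monomial_eq, C_1, one_mul, Finsupp.prod_fintype _ _ (fun _ => pow_zero _),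
      Fintype.prod_sigma]
    simp
  have hform (S : Finset ι) :
      ∑ j ∈ S, (X j.1 : MvPolynomial σ K) = linearForm fun t => (#{j ∈ S | j.1 = t} : K) := by
    rw [linearForm, ← sum_fiberwise S Sigma.fst]
    refine sum_congr rfl fun t _ => ?_
    rw [sum_congr rfl fun j hj => congrArg X (mem_filter.mp hj).2, sum_const, nsmul_eq_mul,
      map_natCast]
  have hsupp (S : Finset ι) (t : σ) (ht : t ∉ s) : (#{j ∈ S | j.1 = t} : K) = 0 := by
    simp only [Nat.cast_eq_zero, card_eq_zero, filter_eq_empty_iff]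
    rintro ⟨t', k⟩ - rfl
    exact ht (hms (Finsupp.mem_support_iff.mpr (Fin.pos k).ne'))
  have hpolar := sum_neg_one_pow_mul_sum_pow_card (fun j : ι => (X j.1 : MvPolynomial σ K))
  have hfac : (d ! : K) ≠ 0 := Nat.cast_ne_zero.mpr d.factorial_ne_zero
  have hexpr : monomial m (1 : K) = (d ! : K)⁻¹ •
      ∑ S : Finset ι, (-1 : K) ^ #Sᶜ • (linearForm fun t => (#{j ∈ S | j.1 = t} : K)) ^ d := by
    rw [eq_inv_smul_iff₀ hfac, ← hprod]
    simp only [← hform, smul_eq_C_mul, map_pow, map_neg, map_one, map_natCast]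
    exact hpolar.symm
  rw [hexpr]
  exact Submodule.smul_mem _ _ (Submodule.sum_mem _ fun S _ =>
    Submodule.smul_mem _ _ (Submodule.subset_span ⟨_, d, hsupp S, hd, rfl⟩))

theorem mem_span_linearFormPowers {s : Set σ} {f : MvPolynomial σ K} (hf : f ∈ supported K s)
    (hf0 : constantCoeff f = 0) : f ∈ Submodule.span K (linearFormPowers s) := by
  classical
  rw [f.as_sum]
  refine Submodule.sum_mem _ fun m hm => ?_
  have hm0 : m ≠ 0 := by
    rintro rfl
    exact mem_support_iff.mp hm (by rwa [← constantCoeff_eq])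
  have hms : ↑m.support ⊆ s := fun t ht =>
    mem_supported.mp hf ((mem_vars_iff_mem_support t).mpr ⟨m, hm, ht⟩)
  rw [← mul_one (coeff m f), ← smul_eq_mul, ← smul_monomial]
  exact Submodule.smul_mem _ _ (monomial_one_mem_span_linearFormPowers hm0 hms)

end LinearFormPowers

theorem eq_sum_C_mul_linearSubst_of_eq_sum {σ R : Type*} [Fintype σ] [DecidableEq σ]
    [CommSemiring R] {S T : Matrix σ σ R} (hTS : T * S = 1) {G H : σ → MvPolynomial σ R}
    (hG : ∀ p, G p = ∑ k, C (S p k) * linearSubst T (H k)) (q : σ) :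
    H q = ∑ p, C (T q p) * linearSubst S (G p) := by
  have hGS (p : σ) : linearSubst S (G p) = ∑ k, C (S p k) * H k := by
    simp [hG, linearSubst_linearSubst, hTS, linearSubst_one]
  calc H q = ∑ k, C ((T * S) q k) * H k := by simp [hTS, one_apply, apply_ite C, ite_mul]
    _ = ∑ p, C (T q p) * linearSubst S (G p) := by
      simp only [hGS, mul_apply, map_sum, map_mul, sum_mul, mul_sum, mul_assoc]
      exact sum_comm

section TriangularPowerSum

variable {σ K ι κ : Type*} [Fintype σ] [Field K] [Fintype ι] [Fintype κ]

def IsTriangularPowerSum [LE ι] (H : σ → MvPolynomial σ K) (b c : ι → σ → K) (e : ι → ℕ) :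
    Prop :=
  (∀ i, 0 < e i) ∧ (∀ i j, j ≤ i → ∑ t, c j t * b i t = 0) ∧
    ∀ p, H p = ∑ i, C (b i p) * linearForm (c i) ^ e i

theorem IsTriangularPowerSum.comp_orderIso [LE ι] [LE κ] {H : σ → MvPolynomial σ K}
    {b c : ι → σ → K} {e : ι → ℕ} (h : IsTriangularPowerSum H b c e) (f : κ ≃o ι) :
    IsTriangularPowerSum H (b ∘ f) (c ∘ f) (e ∘ f) := by
  obtain ⟨he, horth, hH⟩ := h
  refine ⟨fun i => he (f i), fun i j hji => horth _ _ (f.le_iff_le.mpr hji), fun p => ?_⟩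
  rw [hH p]
  exact (f.toEquiv.sum_comp fun i => C (b i p) * linearForm (c i) ^ e i).symm

theorem exists_isTriangularPowerSum [LinearOrder σ] [CharZero K] {S T : Matrix σ σ K}
    (hST : S * T = 1) {G H : σ → MvPolynomial σ K}
    (hG : ∀ p, G p ∈ Submodule.span K (linearFormPowers (Set.Iio p)))
    (hH : ∀ q, H q = ∑ p, C (T q p) * linearSubst S (G p)) :
    ∃ (N : σ → ℕ) (b c : (Σₗ p, Fin (N p)) → σ → K) (e : (Σₗ p, Fin (N p)) → ℕ),
      IsTriangularPowerSum H b c e := by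
  choose N a c d hc hd hGeq using fun p => exists_eq_sum_of_mem_span_linearFormPowers (hG p)
  refine ⟨N, fun x q => T q (ofLex x).1 * a _ (ofLex x).2, fun x => c _ (ofLex x).2 ᵥ* S,
    fun x => d _ (ofLex x).2, fun x => hd _ _, fun x y hyx => ?_, fun q => ?_⟩
  · have hp : (ofLex y).1 ≤ (ofLex x).1 := by
      rcases Sigma.Lex.le_def.mp hyx with h | ⟨h, -⟩
      exacts [h.le, h.le]
    calc ∑ t, (c _ (ofLex y).2 ᵥ* S) t * (T t (ofLex x).1 * a _ (ofLex x).2)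
        = (c _ (ofLex y).2 ᵥ* S ᵥ* T) (ofLex x).1 * a _ (ofLex x).2 := by
          simp only [vecMul, dotProduct, sum_mul, mul_assoc]
      _ = 0 := by
          rw [vecMul_vecMul, hST, vecMul_one, hc _ _ _ (not_lt.mpr hp), zero_mul]
  · rw [hH q]
    simp only [hGeq, map_sum, map_mul, algHom_C, algebraMap_eq, map_pow, linearSubst_linearForm,
      mul_sum, ← mul_assoc]
    exact (Fintype.sum_sigma fun x : Σ p, Fin (N p) =>
      C (T q x.1) * C (a x.1 x.2) * linearForm (c x.1 x.2 ᵥ* S) ^ d x.1 x.2).symm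

end TriangularPowerSum

end MvPolynomial

theorem stmt15_general (K : Type*) [Field K] [CharZero K] (n : ℕ)
    (T : Matrix (Fin n) (Fin n) K) (hT : IsUnit T.det)
    (H : Fin n → MvPolynomial (Fin n) K)
    (hH0 : ∀ j, eval (0 : Fin n → K) (H j) = 0)
    (G : Fin n → MvPolynomial (Fin n) K)
    (hG : ∀ p, G p = ∑ k, C (T⁻¹ p k) * bind₁ (fun t : Fin n => ∑ s, C (T t s) * X s) (H k))
    (htri : ∀ p q : Fin n, p ≤ q → pderiv q (G p) = 0) :
    ∃ (N : ℕ) (b c : Fin N → Fin n → K) (e : Fin N → ℕ),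
      (∀ i, 0 < e i) ∧
      (∀ i j : Fin N, j ≤ i → ∑ t, c j t * b i t = 0) ∧
      ∀ p, H p = ∑ i, C (b i p) * (∑ t, C (c i t) * X t) ^ (e i) := by
  have hG' : ∀ p, G p = ∑ k, C (T⁻¹ p k) * linearSubst T (H k) := hG
  have hHG := eq_sum_C_mul_linearSubst_of_eq_sum (mul_nonsing_inv T hT) hG'
  have hH0' (k : Fin n) : constantCoeff (H k) = 0 := by rw [← eval_zero]; exact hH0 k
  have hG0 (p : Fin n) : constantCoeff (G p) = 0 := by
    simp only [hG', map_sum, map_mul, constantCoeff_C, constantCoeff_linearSubst, hH0', mul_zero,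
      sum_const_zero]
  have hGvars (p : Fin n) : G p ∈ supported K (Set.Iio p) :=
    mem_supported.mpr fun t ht =>
      not_le.mp fun hpt => notMem_vars_of_pderiv_eq_zero (htri p t hpt) ht
  obtain ⟨N, b, c, e, h⟩ := exists_isTriangularPowerSum (nonsing_inv_mul T hT)
    (fun p => mem_span_linearFormPowers (hGvars p) (hG0 p)) hHG
  exact ⟨_, _, _, _, h.comp_orderIso (Fintype.orderIsoFinOfCardEq _ rfl)⟩

/-- If `H(0) = 0` and for some `T ∈ GL_n(K)` the Jacobian of `T⁻¹ H(Tx)` is lower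
triangular with zeroes on the diagonal, then `H = ∑_{i=1}^N (cᵢᵀx)^{dᵢ} bᵢ` with
`cⱼᵀbᵢ = 0` for all `i ≥ j` (form (*)). -/
theorem stmt15 (K : Type*) [Field K] [CharZero K] (n : ℕ) (hn : 2 ≤ n)
    (T : Matrix (Fin n) (Fin n) K) (hT : IsUnit T.det)
    (H : Fin n → MvPolynomial (Fin n) K)
    (hH0 : ∀ j, eval (0 : Fin n → K) (H j) = 0)
    (G : Fin n → MvPolynomial (Fin n) K)
    (hG : ∀ p, G p = ∑ k, C (T⁻¹ p k) * bind₁ (fun t : Fin n => ∑ s, C (T t s) * X s) (H k))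
    (htri : ∀ p q : Fin n, p ≤ q → pderiv q (G p) = 0) :
    ∃ (N : ℕ) (b c : Fin N → Fin n → K) (e : Fin N → ℕ),
      (∀ i, 0 < e i) ∧
      (∀ i j : Fin N, j ≤ i → ∑ t, c j t * b i t = 0) ∧
      ∀ p, H p = ∑ i, C (b i p) * (∑ t, C (c i t) * X t) ^ (e i) :=
  stmt15_general K n T hT H hH0 G hG htri
end

section
/- Let d ≥ 1 and consider H = (0, ν·x₁^d, x₁^d − x₂^d, (x₁+2x₃)^d, …, (x₁+dx₃)^d, (x₂+x₃)^d, (x₂+2x₃)^d, …, (x₂+dx₃)^d) : K^{2d+2} → K^{2d+2} for some ν ∈ K, char K = 0. Then the Jacobian JH is lower triangular with zeroes on the diagonal; in particular JH is nilpotent and x + H is invertible. -/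
/-!
Every component `H p` is a polynomial in the variables `x_q` with `q < p` only (indeed only in
`x₁, x₂, x₃`, and the first three components are `0`, `ν x₁^d`, `x₁^d - x₂^d`). Hence
`∂H_p/∂x_q = 0` for `q ≥ p`, so `JH` is strictly lower triangular and its characteristic
polynomial is `X^n`, and `x + H` is a triangular map: `y = x + H(x)` is solved recursively by
`x_p = y_p - H_p(x_q : q < p)`.
-/

open MvPolynomial

theorem Matrix.isNilpotent_of_isLowerTriangular_of_diag_eq_zero {n R : Type*} [Fintype n]
    [DecidableEq n] [LinearOrder n] [CommRing R] {M : Matrix n n R} (hM : M.IsLowerTriangular)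
    (hdiag : M.diag = 0) : IsNilpotent M := by
  refine ⟨Fintype.card n, ?_⟩
  have hχ : M.charpoly = Polynomial.X ^ Fintype.card n := by
    have hii : ∀ i, M i i = 0 := congr_fun hdiag
    simp [charpoly, det_of_isLowerTriangular _ hM.charmatrix, hii]
  simpa [hχ] using M.aeval_self_charpoly

namespace MvPolynomial

variable {R σ τ : Type*}

theorem pderiv_eq_zero_of_mem_supported [CommSemiring R] {s : Set σ} {φ : MvPolynomial σ R}
    (hφ : φ ∈ supported R s) {i : σ} (hi : i ∉ s) : pderiv i φ = 0 :=
  pderiv_eq_zero_of_notMem_vars fun hiφ => hi (mem_supported.1 hφ hiφ)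

theorem bind₁_congr_of_mem_supported [CommSemiring R] {s : Set σ} {φ : MvPolynomial σ R}
    (hφ : φ ∈ supported R s) {f g : σ → MvPolynomial τ R} (hfg : Set.EqOn f g s) :
    bind₁ f φ = bind₁ g φ :=
  eval₂Hom_congr' rfl (fun _ hi _ => hfg (mem_supported.1 hφ hi)) rfl

section Triangular

variable [CommRing R] [Preorder σ] [WellFoundedLT σ] [DecidableLT σ]

noncomputable def triangularInverse (H : σ → MvPolynomial σ R) : σ → MvPolynomial σ R :=
  WellFoundedLT.fix fun p G => X p - bind₁ (fun q => if h : q < p then G q h else 0) (H p)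

theorem triangularInverse_eq (H : σ → MvPolynomial σ R) (p : σ) :
    triangularInverse H p =
      X p - bind₁ (fun q => if q < p then triangularInverse H q else 0) (H p) := by
  rw [triangularInverse, WellFoundedLT.fix_eq]
  simp only [dite_eq_ite]

variable {H : σ → MvPolynomial σ R}

theorem bind₁_triangularInverse_X_add (hH : ∀ p, H p ∈ supported R (Set.Iio p))
    (p : σ) :
    bind₁ (triangularInverse H) (X p + H p) = X p := by
  have hrestrict : bind₁ (fun q => if q < p then triangularInverse H q else 0) (H p) =
      bind₁ (triangularInverse H) (H p) :=
    bind₁_congr_of_mem_supported (hH p) fun q hq => if_pos hq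
  rw [map_add, bind₁_X_right, triangularInverse_eq, hrestrict, sub_add_cancel]

theorem bind₁_X_add_triangularInverse (hH : ∀ p, H p ∈ supported R (Set.Iio p))
    (p : σ) :
    bind₁ (fun k => X k + H k) (triangularInverse H p) = X p := by
  induction p using WellFoundedLT.induction with
  | _ p ih =>
    have hrestrict : bind₁ (fun q => bind₁ (fun k => X k + H k)
        (if q < p then triangularInverse H q else 0)) (H p) = bind₁ X (H p) :=
      bind₁_congr_of_mem_supported (hH p) fun q hq => by rw [if_pos (show q < p from hq), ih q hq]
    rw [triangularInverse_eq, map_sub, bind₁_X_right, bind₁_bind₁, hrestrict, bind₁_X_left,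
      AlgHom.id_apply, add_sub_cancel_right]

end Triangular

end MvPolynomial

/-- For `d ≥ 1`, the map
`H = (0, ν x₁^d, x₁^d - x₂^d, (x₁+2x₃)^d, …, (x₁+dx₃)^d, (x₂+x₃)^d, …, (x₂+dx₃)^d)`
on `K^(2d+2)` has a Jacobian that is lower triangular with zeroes on the diagonal;
in particular `JH` is nilpotent and `x + H` is invertible (with polynomial inverse). -/
theorem stmt18 (K : Type*) [Field K] (d : ℕ) (hd : 1 ≤ d) (ν : K)
    (H : Fin (2 * d + 2) → MvPolynomial (Fin (2 * d + 2)) K)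
    (hH : ∀ j : Fin (2 * d + 2),
      H j =
        if j.val = 0 then 0
        else if j.val = 1 then C ν * X (⟨0, by omega⟩ : Fin (2 * d + 2)) ^ d
        else if j.val = 2 then
          X (⟨0, by omega⟩ : Fin (2 * d + 2)) ^ d - X (⟨1, by omega⟩ : Fin (2 * d + 2)) ^ d
        else if j.val ≤ d + 1 then
          (X (⟨0, by omega⟩ : Fin (2 * d + 2)) +
            (j.val - 1 : ℕ) • X (⟨2, by omega⟩ : Fin (2 * d + 2))) ^ d
        else
          (X (⟨1, by omega⟩ : Fin (2 * d + 2)) +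
            (j.val - (d + 1) : ℕ) • X (⟨2, by omega⟩ : Fin (2 * d + 2))) ^ d) :
    (∀ p q : Fin (2 * d + 2), p ≤ q → pderiv q (H p) = 0) ∧
    IsNilpotent (Matrix.of fun p q : Fin (2 * d + 2) => pderiv q (H p)) ∧
    ∃ G : Fin (2 * d + 2) → MvPolynomial (Fin (2 * d + 2)) K,
      (∀ j, bind₁ (fun k => X k + H k) (G j) = X j) ∧
      (∀ j, bind₁ G (X j + H j) = X j) := by
  have hX : ∀ {i : ℕ} {hi : i < 2 * d + 2} {j : Fin (2 * d + 2)}, i < j.val →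
      X ⟨i, hi⟩ ∈ supported K (Set.Iio j) :=
    fun hij => X_mem_supported.2 hij
  have hsupp : ∀ p, H p ∈ supported K (Set.Iio p) := by
    intro p
    rw [hH p]
    split_ifs
    · exact zero_mem _
    · exact mul_mem (Subalgebra.algebraMap_mem _ ν) (pow_mem (hX (by omega)) d)
    · exact sub_mem (pow_mem (hX (by omega)) d) (pow_mem (hX (by omega)) d)
    · exact pow_mem (add_mem (hX (by omega)) (nsmul_mem (hX (by omega)) _)) d
    · exact pow_mem (add_mem (hX (by omega)) (nsmul_mem (hX (by omega)) _)) d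
  have hJ : ∀ p q : Fin (2 * d + 2), p ≤ q → pderiv q (H p) = 0 :=
    fun p q hpq => pderiv_eq_zero_of_mem_supported (hsupp p) (not_lt.2 hpq)
  refine ⟨hJ, ?_, triangularInverse H, bind₁_X_add_triangularInverse hsupp,
    bind₁_triangularInverse_X_add hsupp⟩
  exact Matrix.isNilpotent_of_isLowerTriangular_of_diag_eq_zero
    (fun p q hpq => hJ p q hpq.le) (funext fun p => hJ p p le_rfl)
end

section
/- Let K have characteristic zero and let H = (0, x₁^d − x₁^{d−1}) : K² → K² for d ≥ 2. Then there exist c₁ ∈ K², b₁ ∈ K², exponents, and N such that H = ∑_{i=1}^{N}(cᵢᵀx)^{dᵢ}bᵢ with cⱼᵀbᵢ = 0 for i ≥ j (form (*)), but there do NOT exist c₁, b₁ ∈ K² and d₁ ∈ {1,…,d} with c₁ᵀb₁ = 0 and H = (c₁ᵀx)^{d₁}·b₁ (form (**) with n−1 = 1 term). -/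
open MvPolynomial Finset

/-- For `d ≥ 2`, the map `H = (0, x₁^d - x₁^(d-1)) : K² → K²` is of form (*)
(a sum of vectors times powers of linear forms with `cⱼᵀbᵢ = 0` for `i ≥ j`), but
not of form (**): it is not a single vector `b₁` times a power `(c₁ᵀx)^(d₁)` with
`c₁ᵀb₁ = 0` and `d₁ ∈ {1,…,d}`. -/
theorem stmt19 (K : Type*) [Field K] [CharZero K] (d : ℕ) (hd : 2 ≤ d)
    (H : Fin 2 → MvPolynomial (Fin 2) K)
    (hH : H = ![0, X 0 ^ d - X 0 ^ (d - 1)]) :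
    (∃ (N : ℕ) (b c : Fin N → Fin 2 → K) (e : Fin N → ℕ),
      (∀ i, 0 < e i) ∧
      (∀ i j : Fin N, j ≤ i → ∑ t, c j t * b i t = 0) ∧
      (∀ p, H p = ∑ i, C (b i p) * (∑ t, C (c i t) * X t) ^ (e i))) ∧
    ¬ ∃ (c b : Fin 2 → K) (e : ℕ), e ∈ Finset.Icc 1 d ∧ (∑ t, c t * b t = 0) ∧
        ∀ p, H p = C (b p) * (∑ t, C (c t) * X t) ^ e := by
  subst hH
  constructor
  · refine ⟨2, ![![0,1],![0,-1]], ![![1,0],![1,0]], ![d, d-1], ?_, ?_, ?_⟩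
    · intro i; fin_cases i <;> simp <;> omega
    · intro i j _
      fin_cases i <;> fin_cases j <;> simp [Fin.sum_univ_two]
    · intro p
      fin_cases p <;>
        simp [Fin.sum_univ_two, sub_eq_add_neg]
  · rintro ⟨c, b, e, he, -, hpoly⟩
    have h1 := hpoly 1
    simp only [Fin.sum_univ_two, Matrix.cons_val_one, Matrix.head_cons] at h1
    have h2 := congrArg (aeval (R := K) ![(X 0 : MvPolynomial (Fin 2) K), 0]) h1
    simp only [map_sub, map_pow, map_mul, map_add, aeval_X, aeval_C, algebraMap_eq,
      Matrix.cons_val_zero, Matrix.cons_val_one, Matrix.head_cons, mul_zero, add_zero] at h2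
    -- h2 : X 0 ^ d - X 0 ^ (d-1) = C (b 1) * (C (c 0) * X 0) ^ e
    rw [mul_pow, ← C_pow, ← mul_assoc, ← C_mul] at h2
    have hd' : d - 1 ≠ d := by omega
    have hcd := congrArg (coeff (Finsupp.single 0 d)) h2
    have hcd1 := congrArg (coeff (Finsupp.single 0 (d-1))) h2
    simp only [coeff_sub, coeff_C_mul, coeff_X_pow, Finsupp.single_left_inj,
      (Finsupp.single_injective (0 : Fin 2)).eq_iff] at hcd hcd1
    rw [if_pos trivial, if_neg hd'] at hcd
    rw [if_neg (fun h => hd' h.symm), if_pos trivial] at hcd1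
    by_cases hed : e = d
    · subst hed
      rw [if_neg (fun h => hd' h.symm)] at hcd1
      simp at hcd1
    · rw [if_neg hed] at hcd
      simp at hcd
end
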